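/- arXiv:1009.4535 — 2 statements merged into one kernel-verified Lean document; each statement's English description precedes it below -/
import Mathlib

section
/- For all integers n ≥ 1 and 0 ≤ k ≤ n-1, the number of partial matchings of [n+k-1] with exactly k arcs avoiding neighbor alignments, left nestings and right nestings equals the binomial coefficient C( (n-k)(n-k+1)/2 + k - 1, k ), i.e. R(n+k-1, k) = C( C(n-k+1, 2) + k - 1, k ). -/
open Finset

/-- `(i, j)` is an arc of the linear representation of the set partition `P` of
`{1, ..., n}`: `i < j`, both lie in the same block, and no element of that block
lies strictly between them. -/
def IsArc {n : ℕ} (P : Finpartition (Finset.Icc 1 n)) (a : ℕ × ℕ) : Prop :=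
  a.1 < a.2 ∧ ∃ B ∈ P.parts, a.1 ∈ B ∧ a.2 ∈ B ∧ ∀ c ∈ B, ¬ (a.1 < c ∧ c < a.2)

/-- The number of arcs of a set partition. -/
noncomputable def numArcs {n : ℕ} (P : Finpartition (Finset.Icc 1 n)) : ℕ :=
  {a : ℕ × ℕ | IsArc P a}.ncard

/-- A partial matching: every block has at most two elements. -/
def IsMatching {n : ℕ} (P : Finpartition (Finset.Icc 1 n)) : Prop :=
  ∀ B ∈ P.parts, B.card ≤ 2

/-- A neighbor alignment: arcs `(i₁, j₁)`, `(i₂, j₂)` with `i₁ < j₁ < i₂ < j₂`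
and `j₁ + 1 = i₂`. -/
def HasNbrAlign {n : ℕ} (P : Finpartition (Finset.Icc 1 n)) : Prop :=
  ∃ a b : ℕ × ℕ, IsArc P a ∧ IsArc P b ∧ a.2 + 1 = b.1

/-- A left nesting: arcs `(i₁, j₁)`, `(i₂, j₂)` with `i₁ < i₂ < j₂ < j₁`
and `i₁ + 1 = i₂`. -/
def HasLeftNesting {n : ℕ} (P : Finpartition (Finset.Icc 1 n)) : Prop :=
  ∃ a b : ℕ × ℕ, IsArc P a ∧ IsArc P b ∧ a.1 + 1 = b.1 ∧ b.2 < a.2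

/-- A right nesting: arcs `(i₁, j₁)`, `(i₂, j₂)` with `i₁ < i₂ < j₂ < j₁`
and `j₂ + 1 = j₁`. -/
def HasRightNesting {n : ℕ} (P : Finpartition (Finset.Icc 1 n)) : Prop :=
  ∃ a b : ℕ × ℕ, IsArc P a ∧ IsArc P b ∧ a.1 < b.1 ∧ b.2 + 1 = a.2

/-- The number of left crossings: pairs of arcs `(i₁, j₁)`, `(i₂, j₂)` with
`i₁ < i₂ < j₁ < j₂` and `i₁ + 1 = i₂`. -/
noncomputable def numLeftCrossings {n : ℕ} (P : Finpartition (Finset.Icc 1 n)) : ℕ :=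
  {p : (ℕ × ℕ) × (ℕ × ℕ) |
    IsArc P p.1 ∧ IsArc P p.2 ∧ p.1.1 + 1 = p.2.1 ∧ p.2.1 < p.1.2 ∧ p.1.2 < p.2.2}.ncard

/-- The number of transients: elements of a block that are neither the minimum
nor the maximum of their block. -/
noncomputable def numTransients {n : ℕ} (P : Finpartition (Finset.Icc 1 n)) : ℕ :=
  {x : ℕ | ∃ B ∈ P.parts, x ∈ B ∧ (∃ y ∈ B, y < x) ∧ (∃ y ∈ B, x < y)}.ncard

/-- `Pnum n k`: the number of partial matchings of `[n]` with exactly `k` arcs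
and no neighbor alignments. -/
noncomputable def Pnum (n k : ℕ) : ℕ :=
  {P : Finpartition (Finset.Icc 1 n) |
    IsMatching P ∧ numArcs P = k ∧ ¬ HasNbrAlign P}.ncard

/-- `Qnum n k`: the number of partial matchings of `[n]` with exactly `k` arcs,
no neighbor alignments and no left nestings. -/
noncomputable def Qnum (n k : ℕ) : ℕ :=
  {P : Finpartition (Finset.Icc 1 n) |
    IsMatching P ∧ numArcs P = k ∧ ¬ HasNbrAlign P ∧ ¬ HasLeftNesting P}.ncard

/-- `Rnum n k`: the number of partial matchings of `[n]` with exactly `k` arcs,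
no neighbor alignments, no left nestings and no right nestings. -/
noncomputable def Rnum (n k : ℕ) : ℕ :=
  {P : Finpartition (Finset.Icc 1 n) |
    IsMatching P ∧ numArcs P = k ∧ ¬ HasNbrAlign P ∧ ¬ HasLeftNesting P ∧
      ¬ HasRightNesting P}.ncard

/-- `Tnum n k`: the number of set partitions of `[n]` with exactly `k` arcs and
no right nestings. -/
noncomputable def Tnum (n k : ℕ) : ℕ :=
  {P : Finpartition (Finset.Icc 1 n) | numArcs P = k ∧ ¬ HasRightNesting P}.ncard

/-- `Stirling m b`: the Stirling number of the second kind, the number of set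
partitions of `{1, ..., m}` into `b` blocks. -/
noncomputable def Stirling (m b : ℕ) : ℕ :=
  {P : Finpartition (Finset.Icc 1 m) | P.parts.card = b}.ncard

/-!
In a partial matching of `[m]` with `k` arcs, the `s = m - 2k` isolated points cut `[m]` into
`s + 1` gaps, each a (possibly empty) run of arc endpoints. Record each arc by the pair
`g₁ ≤ g₂` of gaps containing its endpoints. Without neighbor alignments, inside a gap all left
endpoints precede all right endpoints; without left nestings the left endpoints of a gap come in
increasing order of their partners, and without right nestings so do its right endpoints. So
the matching is determined by the multiset of its `k` gap pairs, and every multiset of `k` pairs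
`g₁ ≤ g₂ ≤ s` arises, by laying out each gap in this canonical order. Hence the count is the
number of `k`-multisets of a set of `(s + 1)(s + 2) / 2` pairs; for `m = n + k - 1`,
`s + 1 = n - k`.
-/

lemma Multiset.card_filter_add_card_filter_le {α : Type*} (s : Multiset α) {p q r : α → Prop}
    [DecidablePred p] [DecidablePred q] [DecidablePred r] (hpq : ∀ x, p x → ¬ q x)
    (hp : ∀ x, p x → r x) (hq : ∀ x, q x → r x) :
    (s.filter p).card + (s.filter q).card ≤ (s.filter r).card := by
  rw [← Multiset.card_add, Multiset.filter_add_filter,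
    (Multiset.filter_eq_nil (p := fun x => p x ∧ q x)).2 fun x _ h => hpq x h.1 h.2, add_zero]
  exact Multiset.card_le_card (Multiset.monotone_filter_right s fun x hx => hx.elim (hp x) (hq x))

lemma Multiset.sum_range_card_filter_eq {α : Type*} (s : Multiset α) (f : α → ℕ) (T : ℕ) :
    ∑ h ∈ Finset.range T, (s.filter (f · = h)).card = (s.filter (f · < T)).card := by
  induction T with
  | zero => simp
  | succ T ih =>
    rw [sum_range_succ, ih, ← Multiset.card_add, Multiset.filter_add_filter,
      (Multiset.filter_eq_nil (p := fun x => f x < T ∧ f x = T)).2 fun x _ h => h.1.ne h.2,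
      add_zero]
    congr 1
    exact Multiset.filter_congr fun x _ => by omega

lemma Finset.card_filter_or_of_disjoint {α : Type*} [DecidableEq α] (s : Finset α)
    {p q : α → Prop} [DecidablePred p] [DecidablePred q] (h : ∀ x ∈ s, p x → ¬ q x) :
    #{x ∈ s | p x ∨ q x} = #{x ∈ s | p x} + #{x ∈ s | q x} := by
  rw [filter_or, card_union_of_disjoint (disjoint_filter.2 h)]

section Arcs

variable {n : ℕ} {P Q : Finpartition (Icc 1 n)}

lemma IsArc.mem_Icc {a : ℕ × ℕ} (ha : IsArc P a) : a.1 ∈ Icc 1 n ∧ a.2 ∈ Icc 1 n := by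
  obtain ⟨-, B, hB, h1, h2, -⟩ := ha
  exact ⟨P.le hB h1, P.le hB h2⟩

lemma setOf_isArc_finite (P : Finpartition (Icc 1 n)) : {a : ℕ × ℕ | IsArc P a}.Finite :=
  (Icc 1 n ×ˢ Icc 1 n).finite_toSet.subset fun _ ha => Finset.mem_product.2 ha.mem_Icc

noncomputable def arcFinset (P : Finpartition (Icc 1 n)) : Finset (ℕ × ℕ) :=
  (setOf_isArc_finite P).toFinset

@[simp]
lemma mem_arcFinset {a : ℕ × ℕ} : a ∈ arcFinset P ↔ IsArc P a := Set.Finite.mem_toFinset _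

lemma numArcs_eq_card_arcFinset (P : Finpartition (Icc 1 n)) :
    numArcs P = (arcFinset P).card := by
  rw [numArcs, arcFinset, ← Set.ncard_coe_finset, Set.Finite.coe_toFinset]

lemma isArc_of_pair_mem_parts {x y : ℕ} (hxy : x < y) (hB : {x, y} ∈ P.parts) :
    IsArc P (x, y) :=
  ⟨hxy, {x, y}, hB, by simp, by simp, fun c hc => by
    simp only [mem_insert, mem_singleton] at hc; omega⟩

lemma IsMatching.pair_mem_parts (hP : IsMatching P) {a : ℕ × ℕ} (ha : IsArc P a) :
    {a.1, a.2} ∈ P.parts := by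
  obtain ⟨hlt, B, hB, h1, h2, -⟩ := ha
  have hsub : {a.1, a.2} ⊆ B := insert_subset h1 (singleton_subset_iff.2 h2)
  rwa [eq_of_subset_of_card_le hsub ((hP B hB).trans (card_pair hlt.ne).ge)]

lemma IsMatching.eq_pair_or_eq_singleton (hP : IsMatching P) {B : Finset ℕ} (hB : B ∈ P.parts) :
    (∃ a, IsArc P a ∧ B = {a.1, a.2}) ∨ ∃ x, B = {x} := by
  have hpos := (P.nonempty_of_mem_parts hB).card_pos
  rcases (show B.card = 1 ∨ B.card = 2 by have := hP B hB; omega) with h | h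
  · exact Or.inr (card_eq_one.1 h)
  · obtain ⟨x, y, hxy, rfl⟩ := card_eq_two.1 h
    rcases hxy.lt_or_gt with hlt | hlt
    · exact Or.inl ⟨(x, y), isArc_of_pair_mem_parts hlt hB, rfl⟩
    · exact Or.inl ⟨(y, x), isArc_of_pair_mem_parts hlt (pair_comm x y ▸ hB), pair_comm x y⟩

lemma IsMatching.arc_eq_of_common_endpoint (hP : IsMatching P) {a b : ℕ × ℕ}
    (ha : IsArc P a) (hb : IsArc P b)
    (h : a.1 = b.1 ∨ a.1 = b.2 ∨ a.2 = b.1 ∨ a.2 = b.2) : a = b := by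
  have hx : ∃ x, x ∈ ({a.1, a.2} : Finset ℕ) ∧ x ∈ ({b.1, b.2} : Finset ℕ) := by
    rcases h with h | h | h | h <;> simp [h]
  obtain ⟨x, hxa, hxb⟩ := hx
  have hab := P.eq_of_mem_parts (hP.pair_mem_parts ha) (hP.pair_mem_parts hb) hxa hxb
  have m1 : a.1 ∈ ({b.1, b.2} : Finset ℕ) := hab ▸ by simp
  have m2 : a.2 ∈ ({b.1, b.2} : Finset ℕ) := hab ▸ by simp
  simp only [mem_insert, mem_singleton] at m1 m2
  have := ha.1
  have := hb.1
  exact Prod.ext (by omega) (by omega)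

lemma IsMatching.fst_ne_snd (hP : IsMatching P) {a b : ℕ × ℕ} (ha : IsArc P a)
    (hb : IsArc P b) : a.1 ≠ b.2 := by
  intro h
  obtain rfl := hP.arc_eq_of_common_endpoint ha hb (by omega)
  exact ha.1.ne h

lemma IsMatching.parts_subset_of_isArc_iff (hP : IsMatching P) (hQ : IsMatching Q)
    (h : ∀ a, IsArc P a ↔ IsArc Q a) : P.parts ⊆ Q.parts := by
  intro B hB
  rcases hP.eq_pair_or_eq_singleton hB with ⟨a, ha, rfl⟩ | ⟨x, rfl⟩
  · exact hQ.pair_mem_parts ((h a).1 ha)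
  obtain ⟨C, hC, hxC⟩ := Q.exists_mem (P.le hB (mem_singleton_self x))
  rcases hQ.eq_pair_or_eq_singleton hC with ⟨c, hc, rfl⟩ | ⟨y, rfl⟩
  · have := P.eq_of_mem_parts hB (hP.pair_mem_parts ((h c).2 hc)) (mem_singleton_self x) hxC
    have := (card_pair hc.1.ne).symm.trans (congrArg card this.symm)
    simp at this
  · rwa [mem_singleton.1 hxC]

lemma IsMatching.ext_of_isArc_iff (hP : IsMatching P) (hQ : IsMatching Q)
    (h : ∀ a, IsArc P a ↔ IsArc Q a) : P = Q :=
  Finpartition.ext ((hP.parts_subset_of_isArc_iff hQ h).antisymm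
    (hQ.parts_subset_of_isArc_iff hP fun a => (h a).symm))

end Arcs

section OfArcs

variable {n : ℕ} {A : Finset (ℕ × ℕ)}

def endpoints (A : Finset (ℕ × ℕ)) : Finset ℕ := A.biUnion fun a => {a.1, a.2}

lemma mem_endpoints {x : ℕ} : x ∈ endpoints A ↔ ∃ a ∈ A, a.1 = x ∨ a.2 = x := by
  simp [endpoints, eq_comm]

def ArcsInRange (n : ℕ) (A : Finset (ℕ × ℕ)) : Prop :=
  ∀ a ∈ A, a.1 < a.2 ∧ 1 ≤ a.1 ∧ a.2 ≤ n

def EndpointsDistinct (A : Finset (ℕ × ℕ)) : Prop :=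
  ∀ a ∈ A, ∀ b ∈ A, (a.1 = b.1 ∨ a.1 = b.2 ∨ a.2 = b.1 ∨ a.2 = b.2) → a = b

def pairBlocks (n : ℕ) (A : Finset (ℕ × ℕ)) : Finset (Finset ℕ) :=
  A.image (fun a => {a.1, a.2}) ∪ (Icc 1 n \ endpoints A).image singleton

lemma mem_pairBlocks {B : Finset ℕ} :
    B ∈ pairBlocks n A ↔
      (∃ a ∈ A, B = {a.1, a.2}) ∨ ∃ x ∈ Icc 1 n, x ∉ endpoints A ∧ B = {x} := by
  simp only [pairBlocks, mem_union, mem_image, mem_sdiff, and_assoc, eq_comm]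

def ofArcs (n : ℕ) (A : Finset (ℕ × ℕ)) (hrange : ArcsInRange n A)
    (hA : EndpointsDistinct A) : Finpartition (Icc 1 n) where
  parts := pairBlocks n A
  supIndep := by
    rw [supIndep_iff_pairwiseDisjoint]
    intro B hB C hC hne
    simp only [mem_coe, mem_pairBlocks] at hB hC
    simp only [Function.onFun, id, disjoint_left]
    intro x hxB hxC
    rcases hB with ⟨a, ha, rfl⟩ | ⟨u, -, hu, rfl⟩ <;>
      rcases hC with ⟨b, hb, rfl⟩ | ⟨v, -, hv, rfl⟩ <;>
      simp only [mem_insert, mem_singleton] at hxB hxC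
    · exact hne (by rw [hA a ha b hb (by omega)])
    · exact hv (mem_endpoints.2 ⟨a, ha, by omega⟩)
    · exact hu (mem_endpoints.2 ⟨b, hb, by omega⟩)
    · exact hne (by rw [← hxB, ← hxC])
  sup_parts := by
    refine le_antisymm (Finset.sup_le fun B hB => ?_) fun x hx => ?_
    · rcases mem_pairBlocks.1 hB with ⟨a, ha, rfl⟩ | ⟨u, hu, -, rfl⟩
      · have := hrange a ha
        intro x hx
        simp only [id, mem_insert, mem_singleton] at hx
        rw [mem_Icc]; omega
      · exact singleton_subset_iff.2 hu
    · rw [mem_sup]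
      by_cases hxe : x ∈ endpoints A
      · obtain ⟨a, ha, hax⟩ := mem_endpoints.1 hxe
        exact ⟨{a.1, a.2}, mem_pairBlocks.2 (Or.inl ⟨a, ha, rfl⟩), by
          simp only [id, mem_insert, mem_singleton]; omega⟩
      · exact ⟨{x}, mem_pairBlocks.2 (Or.inr ⟨x, hx, hxe, rfl⟩), mem_singleton_self x⟩
  bot_notMem hB := by
    rcases mem_pairBlocks.1 hB with ⟨a, -, h⟩ | ⟨u, -, -, h⟩
    · exact insert_ne_empty _ _ h.symm
    · exact singleton_ne_empty _ h.symm

variable {hrange : ArcsInRange n A} {hA : EndpointsDistinct A}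

lemma isArc_ofArcs_iff {a : ℕ × ℕ} : IsArc (ofArcs n A hrange hA) a ↔ a ∈ A := by
  refine ⟨fun ⟨hlt, B, hB, h1, h2, _⟩ => ?_, fun ha => ?_⟩
  · rcases mem_pairBlocks.1 hB with ⟨b, hb, rfl⟩ | ⟨u, -, -, rfl⟩
    · have := (hrange b hb).1
      simp only [mem_insert, mem_singleton] at h1 h2
      rwa [show a = b from Prod.ext (by omega) (by omega)]
    · simp only [mem_singleton] at h1 h2; omega
  · exact isArc_of_pair_mem_parts (hrange a ha).1 (mem_pairBlocks.2 (Or.inl ⟨a, ha, rfl⟩))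

lemma isMatching_ofArcs : IsMatching (ofArcs n A hrange hA) := by
  intro B hB
  rcases mem_pairBlocks.1 hB with ⟨a, -, rfl⟩ | ⟨u, -, -, rfl⟩
  · exact card_le_two
  · simp

lemma arcFinset_ofArcs : arcFinset (ofArcs n A hrange hA) = A := by
  ext a; rw [mem_arcFinset, isArc_ofArcs_iff]

lemma card_filter_endpoints (hlt : ∀ a ∈ A, a.1 < a.2)
    (hA : EndpointsDistinct A) (p : ℕ → Prop) [DecidablePred p] :
    #{x ∈ endpoints A | p x} = #{a ∈ A | p a.1} + #{a ∈ A | p a.2} := by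
  have hsplit : {x ∈ endpoints A | p x} =
      {a ∈ A | p a.1}.image Prod.fst ∪ {a ∈ A | p a.2}.image Prod.snd := by
    ext x
    simp only [mem_filter, mem_endpoints, mem_union, mem_image]
    constructor
    · rintro ⟨⟨a, ha, rfl | rfl⟩, hx⟩
      exacts [Or.inl ⟨a, ⟨ha, hx⟩, rfl⟩, Or.inr ⟨a, ⟨ha, hx⟩, rfl⟩]
    · rintro (⟨a, ⟨ha, hx⟩, rfl⟩ | ⟨a, ⟨ha, hx⟩, rfl⟩)
      exacts [⟨⟨a, ha, Or.inl rfl⟩, hx⟩, ⟨⟨a, ha, Or.inr rfl⟩, hx⟩]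
  rw [hsplit, card_union_of_disjoint, card_image_of_injOn, card_image_of_injOn]
  · exact fun a ha b hb h => hA a (mem_filter.1 ha).1 b (mem_filter.1 hb).1 (by simp_all)
  · exact fun a ha b hb h => hA a (mem_filter.1 ha).1 b (mem_filter.1 hb).1 (by simp_all)
  · simp only [disjoint_left, mem_image, mem_filter]
    rintro x ⟨a, ⟨ha, -⟩, rfl⟩ ⟨b, ⟨hb, -⟩, hba⟩
    obtain rfl := hA a ha b hb (Or.inr (Or.inl hba.symm))
    exact (hlt a ha).ne hba.symm

lemma card_endpoints (hlt : ∀ a ∈ A, a.1 < a.2) (hA : EndpointsDistinct A) :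
    #(endpoints A) = 2 * #A := by
  simpa [two_mul] using card_filter_endpoints hlt hA fun _ => True

end OfArcs

namespace GapMultiset

/- The canonical layout of a multiset `μ` of gap pairs: gap `g` fills the positions
`gapStart μ g ≤ x < gapEnd μ g` and is followed by the isolated point `gapEnd μ g`. It holds
first the left endpoints of the pairs `e` with `e.1 = g`, ordered by `e.2`, then the right
endpoints of the pairs with `e.2 = g`, ordered by `e.1`; the `j`-th copy of `e` in `μ` is the
arc `(leftEnd μ e j, rightEnd μ e j)`. -/

variable (μ : Multiset (ℕ × ℕ))

def leftCount (g : ℕ) : ℕ := (μ.filter (·.1 = g)).card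

def rightCount (g : ℕ) : ℕ := (μ.filter (·.2 = g)).card

def gapSize (g : ℕ) : ℕ := leftCount μ g + rightCount μ g

def gapStart (g : ℕ) : ℕ := 1 + g + ∑ h ∈ range g, gapSize μ h

def gapEnd (g : ℕ) : ℕ := gapStart μ g + gapSize μ g

def leftRank (e : ℕ × ℕ) : ℕ := (μ.filter fun f => f.1 = e.1 ∧ f.2 < e.2).card

def rightRank (e : ℕ × ℕ) : ℕ :=
  leftCount μ e.2 + (μ.filter fun f => f.2 = e.2 ∧ f.1 < e.1).card

def leftEnd (e : ℕ × ℕ) (j : ℕ) : ℕ := gapStart μ e.1 + leftRank μ e + j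

def rightEnd (e : ℕ × ℕ) (j : ℕ) : ℕ := gapStart μ e.2 + rightRank μ e + j

def arcs : Finset (ℕ × ℕ) :=
  μ.toFinset.biUnion fun e => (range (μ.count e)).image fun j => (leftEnd μ e j, rightEnd μ e j)

def Valid (s : ℕ) : Prop := ∀ e ∈ μ, e.1 ≤ e.2 ∧ e.2 ≤ s

variable {μ} {s : ℕ}

lemma leftRank_add_count_le_leftCount (e : ℕ × ℕ) :
    leftRank μ e + μ.count e ≤ leftCount μ e.1 := by
  rw [Multiset.count_eq_card_filter_eq]
  exact μ.card_filter_add_card_filter_le (by rintro x ⟨-, h⟩ rfl; omega) (fun _ h => h.1)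
    (by rintro x rfl; rfl)

lemma leftRank_add_count_le {e e' : ℕ × ℕ} (h1 : e.1 = e'.1) (h2 : e.2 < e'.2) :
    leftRank μ e + μ.count e ≤ leftRank μ e' := by
  rw [Multiset.count_eq_card_filter_eq]
  exact μ.card_filter_add_card_filter_le (by rintro x ⟨-, h⟩ rfl; omega)
    (fun _ h => ⟨h.1.trans h1, by omega⟩) (by rintro x rfl; exact ⟨h1, h2⟩)

lemma rightRank_add_count_le_gapSize (e : ℕ × ℕ) :
    rightRank μ e + μ.count e ≤ gapSize μ e.2 := by
  rw [rightRank, gapSize, Multiset.count_eq_card_filter_eq, add_assoc]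
  exact Nat.add_le_add_left (μ.card_filter_add_card_filter_le (by rintro x ⟨-, h⟩ rfl; omega)
    (fun _ h => h.1) (by rintro x rfl; rfl)) _

lemma rightRank_add_count_le {e e' : ℕ × ℕ} (h1 : e.2 = e'.2) (h2 : e.1 < e'.1) :
    rightRank μ e + μ.count e ≤ rightRank μ e' := by
  rw [rightRank, rightRank, Multiset.count_eq_card_filter_eq, add_assoc, h1]
  exact Nat.add_le_add_left (μ.card_filter_add_card_filter_le (by rintro x ⟨-, h⟩ rfl; omega)
    (fun _ h => ⟨h.1, by omega⟩) (by rintro x rfl; exact ⟨h1, h2⟩)) _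

lemma gapStart_succ (g : ℕ) : gapStart μ (g + 1) = gapEnd μ g + 1 := by
  rw [gapEnd, gapStart, gapStart, sum_range_succ]; ring

lemma gapEnd_lt_gapStart {g g' : ℕ} (h : g < g') : gapEnd μ g < gapStart μ g' := by
  have hsum : ∑ h ∈ range (g + 1), gapSize μ h ≤ ∑ h ∈ range g', gapSize μ h :=
    sum_le_sum_of_subset (range_subset_range.2 h)
  have := gapStart_succ (μ := μ) g
  rw [gapStart] at this ⊢
  omega

lemma gapStart_le_gapEnd (g : ℕ) : gapStart μ g ≤ gapEnd μ g := Nat.le_add_right _ _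

lemma gapStart_add_leftCount_le_gapEnd (g : ℕ) : gapStart μ g + leftCount μ g ≤ gapEnd μ g :=
  Nat.add_le_add_left (Nat.le_add_right _ _) _

lemma gapStart_mono : Monotone (gapStart μ) := by
  intro g g' h
  rcases h.eq_or_lt with rfl | h
  · exact le_rfl
  · exact (gapStart_le_gapEnd g).trans (gapEnd_lt_gapStart h).le

lemma gapEnd_strictMono : StrictMono (gapEnd μ) :=
  fun _ _ h => (gapEnd_lt_gapStart h).trans_le (gapStart_le_gapEnd _)

lemma le_of_gapStart_le_of_le_gapEnd {g g' x : ℕ} (h1 : gapStart μ g' ≤ x)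
    (h2 : x ≤ gapEnd μ g) : g' ≤ g := by
  by_contra! h
  have := gapEnd_lt_gapStart (μ := μ) h
  omega

lemma eq_of_mem_gap {g g' x : ℕ} (h : gapStart μ g ≤ x ∧ x ≤ gapEnd μ g)
    (h' : gapStart μ g' ≤ x ∧ x ≤ gapEnd μ g') : g = g' :=
  le_antisymm (le_of_gapStart_le_of_le_gapEnd h.1 h'.2) (le_of_gapStart_le_of_le_gapEnd h'.1 h.2)

lemma leftEnd_mem_gap {e : ℕ × ℕ} {j : ℕ} (hj : j < μ.count e) :
    gapStart μ e.1 ≤ leftEnd μ e j ∧ leftEnd μ e j < gapStart μ e.1 + leftCount μ e.1 := by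
  have := leftRank_add_count_le_leftCount (μ := μ) e
  rw [leftEnd]; omega

lemma rightEnd_mem_gap {e : ℕ × ℕ} {j : ℕ} (hj : j < μ.count e) :
    gapStart μ e.2 + leftCount μ e.2 ≤ rightEnd μ e j ∧ rightEnd μ e j < gapEnd μ e.2 := by
  have := rightRank_add_count_le_gapSize (μ := μ) e
  rw [rightEnd, rightRank, gapEnd] at *; omega

lemma leftEnd_lt_gapEnd {e : ℕ × ℕ} {j : ℕ} (hj : j < μ.count e) :
    leftEnd μ e j < gapEnd μ e.1 :=
  (leftEnd_mem_gap hj).2.trans_le (gapStart_add_leftCount_le_gapEnd _)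

lemma mem_arcs {a : ℕ × ℕ} :
    a ∈ arcs μ ↔ ∃ e ∈ μ, ∃ j < μ.count e, (leftEnd μ e j, rightEnd μ e j) = a := by
  simp only [arcs, mem_biUnion, Multiset.mem_toFinset, mem_image, mem_range]

lemma leftEnd_inj {e e' : ℕ × ℕ} {j j' : ℕ} (hj : j < μ.count e) (hj' : j' < μ.count e')
    (h : leftEnd μ e j = leftEnd μ e' j') : e = e' ∧ j = j' := by
  have hz := leftEnd_mem_gap hj
  have hz' := leftEnd_mem_gap hj'
  have := leftEnd_lt_gapEnd hj
  have := leftEnd_lt_gapEnd hj'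
  have hp : e.1 = e'.1 := eq_of_mem_gap (μ := μ) (x := leftEnd μ e j) (by omega) (by omega)
  have hq : e.2 = e'.2 := by
    rcases lt_trichotomy e.2 e'.2 with hlt | heq | hlt
    · have := leftRank_add_count_le (μ := μ) hp hlt
      rw [leftEnd, leftEnd, hp] at h; omega
    · exact heq
    · have := leftRank_add_count_le (μ := μ) hp.symm hlt
      rw [leftEnd, leftEnd, hp] at h; omega
  obtain rfl : e = e' := Prod.ext hp hq
  exact ⟨rfl, by rw [leftEnd, leftEnd] at h; omega⟩

lemma rightEnd_inj {e e' : ℕ × ℕ} {j j' : ℕ} (hj : j < μ.count e) (hj' : j' < μ.count e')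
    (h : rightEnd μ e j = rightEnd μ e' j') : e = e' ∧ j = j' := by
  have hz := rightEnd_mem_gap hj
  have hz' := rightEnd_mem_gap hj'
  have hq : e.2 = e'.2 := eq_of_mem_gap (μ := μ) (x := rightEnd μ e j) (by omega) (by omega)
  have hp : e.1 = e'.1 := by
    rcases lt_trichotomy e.1 e'.1 with hlt | heq | hlt
    · have := rightRank_add_count_le (μ := μ) hq hlt
      rw [rightEnd, rightEnd, hq] at h; omega
    · exact heq
    · have := rightRank_add_count_le (μ := μ) hq.symm hlt
      rw [rightEnd, rightEnd, hq] at h; omega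
  obtain rfl : e = e' := Prod.ext hp hq
  exact ⟨rfl, by rw [rightEnd, rightEnd] at h; omega⟩

lemma leftEnd_ne_rightEnd {e e' : ℕ × ℕ} {j j' : ℕ} (hj : j < μ.count e)
    (hj' : j' < μ.count e') : leftEnd μ e j ≠ rightEnd μ e' j' := by
  intro h
  have hz := leftEnd_mem_gap hj
  have hz' := rightEnd_mem_gap hj'
  have := leftEnd_lt_gapEnd hj
  have hp : e.1 = e'.2 := eq_of_mem_gap (μ := μ) (x := leftEnd μ e j) (by omega) (by omega)
  rw [hp] at hz; omega

lemma leftEnd_lt_rightEnd {e e' : ℕ × ℕ} {j j' : ℕ} (hj : j < μ.count e)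
    (hj' : j' < μ.count e') (hle : e.1 ≤ e'.2) : leftEnd μ e j < rightEnd μ e' j' := by
  have hl := leftEnd_mem_gap hj
  have hr := rightEnd_mem_gap hj'
  rcases hle.lt_or_eq with hlt | heq
  · have := gapEnd_lt_gapStart (μ := μ) hlt
    have := gapStart_add_leftCount_le_gapEnd (μ := μ) e.1
    omega
  · rw [heq] at hl; omega

lemma card_arcs (μ : Multiset (ℕ × ℕ)) : (arcs μ).card = Multiset.card μ := by
  rw [arcs, card_biUnion]
  · rw [sum_congr rfl fun e _ => card_image_of_injOn fun j hj j' hj' h =>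
      (leftEnd_inj (mem_range.1 hj) (mem_range.1 hj') (congrArg Prod.fst h)).2]
    simp only [card_range]
    exact Multiset.toFinset_sum_count_eq μ
  · intro e _ e' _ hne
    refine disjoint_left.2 fun a ha ha' => hne ?_
    obtain ⟨j, hj, rfl⟩ := mem_image.1 ha
    obtain ⟨j', hj', h⟩ := mem_image.1 ha'
    exact (leftEnd_inj (mem_range.1 hj') (mem_range.1 hj) (congrArg Prod.fst h)).1.symm

lemma fst_lt_snd_of_mem_arcs (hμ : ∀ e ∈ μ, e.1 ≤ e.2) {a : ℕ × ℕ}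
    (ha : a ∈ arcs μ) : a.1 < a.2 := by
  obtain ⟨e, he, j, hj, rfl⟩ := mem_arcs.1 ha
  exact leftEnd_lt_rightEnd hj hj (hμ e he)

lemma endpointsDistinct_arcs : EndpointsDistinct (arcs μ) := by
  intro a ha b hb h
  obtain ⟨e, -, j, hj, rfl⟩ := mem_arcs.1 ha
  obtain ⟨e', -, j', hj', rfl⟩ := mem_arcs.1 hb
  rcases h with h | h | h | h
  · obtain ⟨rfl, rfl⟩ := leftEnd_inj hj hj' h
    rfl
  · exact absurd h (leftEnd_ne_rightEnd hj hj')
  · exact absurd h.symm (leftEnd_ne_rightEnd hj' hj)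
  · obtain ⟨rfl, rfl⟩ := rightEnd_inj hj hj' h
    rfl

lemma gapStart_succ_of_valid (hμ : Valid μ s) :
    gapStart μ (s + 1) = s + 2 + 2 * Multiset.card μ := by
  have hcount (f : ℕ × ℕ → ℕ) (hf : ∀ e ∈ μ, f e ≤ s) :
      ∑ h ∈ range (s + 1), (μ.filter (f · = h)).card = Multiset.card μ := by
    rw [Multiset.sum_range_card_filter_eq,
      Multiset.filter_eq_self.2 fun e he => Nat.lt_succ_of_le (hf e he)]
  simp only [gapStart, gapSize, sum_add_distrib, leftCount, rightCount]
  rw [hcount Prod.fst fun e he => (hμ e he).1.trans (hμ e he).2,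
    hcount Prod.snd fun e he => (hμ e he).2]
  ring

lemma one_le_fst_of_mem_arcs {a : ℕ × ℕ} (ha : a ∈ arcs μ) : 1 ≤ a.1 := by
  obtain ⟨e, -, j, -, rfl⟩ := mem_arcs.1 ha
  simp only [leftEnd, gapStart]; omega

lemma snd_le_of_mem_arcs (hμ : Valid μ s) {a : ℕ × ℕ} (ha : a ∈ arcs μ) :
    a.2 ≤ s + 2 * Multiset.card μ := by
  obtain ⟨e, he, j, hj, rfl⟩ := mem_arcs.1 ha
  have h1 := (rightEnd_mem_gap hj).2
  have h2 := gapStart_succ (μ := μ) e.2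
  have h3 := gapStart_mono (μ := μ) (show e.2 + 1 ≤ s + 1 by have := (hμ e he).2; omega)
  have h4 := gapStart_succ_of_valid hμ
  dsimp only; omega

lemma not_snd_add_one_eq_fst_of_mem_arcs {a b : ℕ × ℕ} (ha : a ∈ arcs μ)
    (hb : b ∈ arcs μ) : a.2 + 1 ≠ b.1 := by
  obtain ⟨e, -, j, hj, rfl⟩ := mem_arcs.1 ha
  obtain ⟨e', -, j', hj', rfl⟩ := mem_arcs.1 hb
  have hz := rightEnd_mem_gap hj
  have hz' := leftEnd_mem_gap hj'
  dsimp only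
  rcases lt_trichotomy e'.1 e.2 with h | h | h
  · have := gapEnd_lt_gapStart (μ := μ) h
    have := gapStart_add_leftCount_le_gapEnd (μ := μ) e'.1
    omega
  · rw [h] at hz'; omega
  · have := gapEnd_lt_gapStart (μ := μ) h; omega

lemma not_leftNested_of_mem_arcs {a b : ℕ × ℕ} (ha : a ∈ arcs μ) (hb : b ∈ arcs μ) :
    ¬ (a.1 + 1 = b.1 ∧ b.2 < a.2) := by
  obtain ⟨e, -, j, hj, rfl⟩ := mem_arcs.1 ha
  obtain ⟨e', -, j', hj', rfl⟩ := mem_arcs.1 hb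
  rintro ⟨h1, h2⟩
  have hz := leftEnd_mem_gap hj
  have hz' := leftEnd_mem_gap hj'
  have := leftEnd_lt_gapEnd hj
  have := leftEnd_lt_gapEnd hj'
  have hp : e.1 = e'.1 := le_antisymm (le_of_gapStart_le_of_le_gapEnd (μ := μ) hz.1 (by omega))
    (le_of_gapStart_le_of_le_gapEnd (μ := μ) hz'.1 (by omega))
  have hr := rightEnd_mem_gap hj
  have hr' := rightEnd_mem_gap hj'
  rcases lt_trichotomy e.2 e'.2 with h | h | h
  · have := gapEnd_lt_gapStart (μ := μ) h; omega
  · obtain rfl : e = e' := Prod.ext hp h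
    simp only [leftEnd, rightEnd] at h1 h2; omega
  · have := leftRank_add_count_le (μ := μ) hp.symm h
    simp only [leftEnd, hp] at h1; omega

lemma not_rightNested_of_mem_arcs {a b : ℕ × ℕ} (ha : a ∈ arcs μ) (hb : b ∈ arcs μ) :
    ¬ (a.1 < b.1 ∧ b.2 + 1 = a.2) := by
  obtain ⟨e, -, j, hj, rfl⟩ := mem_arcs.1 ha
  obtain ⟨e', -, j', hj', rfl⟩ := mem_arcs.1 hb
  rintro ⟨h1, h2⟩
  have hr := rightEnd_mem_gap hj
  have hr' := rightEnd_mem_gap hj'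
  have hq : e.2 = e'.2 := le_antisymm
    (le_of_gapStart_le_of_le_gapEnd (μ := μ) (x := rightEnd μ e j) (by omega) (by omega))
    (le_of_gapStart_le_of_le_gapEnd (μ := μ) (x := rightEnd μ e' j') (by omega) (by omega))
  have hz := leftEnd_mem_gap hj
  have hz' := leftEnd_mem_gap hj'
  rcases lt_trichotomy e.1 e'.1 with h | h | h
  · have := rightRank_add_count_le (μ := μ) hq h
    simp only [rightEnd, hq] at h2; omega
  · obtain rfl : e = e' := Prod.ext h hq
    simp only [leftEnd, rightEnd] at h1 h2; omega
  · have := gapEnd_lt_gapStart (μ := μ) h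
    have := gapStart_add_leftCount_le_gapEnd (μ := μ) e'.1
    omega

lemma gapEnd_of_valid (hμ : Valid μ s) : gapEnd μ s = s + 1 + 2 * Multiset.card μ := by
  have := gapStart_succ_of_valid hμ
  rw [gapStart_succ] at this
  omega

lemma arcsInRange (hμ : Valid μ s) : ArcsInRange (s + 2 * Multiset.card μ) (arcs μ) :=
  fun _ ha => ⟨fst_lt_snd_of_mem_arcs (fun e he => (hμ e he).1) ha, one_le_fst_of_mem_arcs ha,
    snd_le_of_mem_arcs hμ ha⟩

lemma exists_mem_gap_of_mem_endpoints {x : ℕ} (hx : x ∈ endpoints (arcs μ)) :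
    ∃ g, gapStart μ g ≤ x ∧ x < gapEnd μ g := by
  obtain ⟨a, ha, hax⟩ := mem_endpoints.1 hx
  obtain ⟨e, -, j, hj, rfl⟩ := mem_arcs.1 ha
  have hl := leftEnd_mem_gap hj
  have hr := rightEnd_mem_gap hj
  rcases hax with rfl | rfl
  · exact ⟨e.1, hl.1, leftEnd_lt_gapEnd hj⟩
  · exact ⟨e.2, (Nat.le_add_right _ _).trans hr.1, hr.2⟩

lemma gapEnd_not_mem_endpoints (g : ℕ) : gapEnd μ g ∉ endpoints (arcs μ) := fun h => by
  obtain ⟨g', h1, h2⟩ := exists_mem_gap_of_mem_endpoints h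
  exact h2.not_ge (gapEnd_strictMono.monotone (le_of_gapStart_le_of_le_gapEnd h1 le_rfl))

lemma Icc_sdiff_endpoints_arcs (hμ : Valid μ s) :
    Icc 1 (s + 2 * Multiset.card μ) \ endpoints (arcs μ) = (range s).image (gapEnd μ) := by
  have htop := gapEnd_of_valid hμ
  symm
  refine eq_of_subset_of_card_le (fun x hx => ?_) ?_
  · obtain ⟨g, hg, rfl⟩ := mem_image.1 hx
    have h1 := gapEnd_strictMono (μ := μ) (mem_range.1 hg)
    have h2 : 1 ≤ gapStart μ g := by unfold gapStart; omega
    exact mem_sdiff.2 ⟨mem_Icc.2 ⟨h2.trans (gapStart_le_gapEnd g), by omega⟩,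
      gapEnd_not_mem_endpoints g⟩
  · rw [card_image_of_injective _ gapEnd_strictMono.injective, card_range,
      card_sdiff_of_subset fun x hx => ?_, card_endpoints (fun a ha => (arcsInRange hμ a ha).1)
        endpointsDistinct_arcs, card_arcs, Nat.card_Icc]
    · omega
    · obtain ⟨a, ha, rfl | rfl⟩ := mem_endpoints.1 hx <;> have := arcsInRange hμ a ha <;>
        exact mem_Icc.2 (by omega)

end GapMultiset

section GapIndex

variable {n : ℕ} {P : Finpartition (Icc 1 n)}

noncomputable def isolated (P : Finpartition (Icc 1 n)) : Finset ℕ :=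
  Icc 1 n \ endpoints (arcFinset P)

noncomputable def gapIndex (P : Finpartition (Icc 1 n)) (x : ℕ) : ℕ :=
  ((isolated P).filter (· < x)).card

lemma gapIndex_mono (P : Finpartition (Icc 1 n)) : Monotone (gapIndex P) :=
  fun _ _ h => card_le_card (monotone_filter_right _ fun _ _ => by omega)

lemma lt_of_gapIndex_lt {x y : ℕ} (h : gapIndex P x < gapIndex P y) : x < y :=
  lt_of_not_ge fun hyx => h.not_ge (gapIndex_mono P hyx)

lemma gapIndex_lt_of_mem_isolated {x y z : ℕ} (hz : z ∈ isolated P) (hxz : x ≤ z)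
    (hzy : z < y) : gapIndex P x < gapIndex P y :=
  card_lt_card ((ssubset_iff_of_subset (monotone_filter_right _ fun _ hw => by omega)).2
    ⟨z, mem_filter.2 ⟨hz, hzy⟩, fun h => by rw [mem_filter] at h; omega⟩)

lemma exists_arc_of_not_mem_isolated {z : ℕ} (hz : z ∈ Icc 1 n) (hz' : z ∉ isolated P) :
    ∃ c, IsArc P c ∧ (c.1 = z ∨ c.2 = z) := by
  rw [isolated, mem_sdiff, not_and_not_right] at hz'
  obtain ⟨c, hc, h⟩ := mem_endpoints.1 (hz' hz)
  exact ⟨c, mem_arcFinset.1 hc, h⟩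

lemma exists_arc_of_gapIndex_eq {x y z : ℕ} (hg : gapIndex P x = gapIndex P y) (hxz : x ≤ z)
    (hzy : z < y) (hz : z ∈ Icc 1 n) : ∃ c, IsArc P c ∧ (c.1 = z ∨ c.2 = z) :=
  exists_arc_of_not_mem_isolated hz fun hiso => (gapIndex_lt_of_mem_isolated hiso hxz hzy).ne hg

/- Walking right from the right endpoint `b.2`, the first left endpoint met right after a right
endpoint forms a neighbor alignment. -/
lemma hasNbrAlign_of_forall_between {a b : ℕ × ℕ} (ha : IsArc P a) (hb : IsArc P b)
    (hlt : b.2 < a.1)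
    (hmid : ∀ z, b.2 < z → z < a.1 → ∃ c, IsArc P c ∧ (c.1 = z ∨ c.2 = z)) :
    HasNbrAlign P := by
  induction h : a.1 - b.2 generalizing b with
  | zero => omega
  | succ d ih =>
    rcases (Nat.succ_le_of_lt hlt).eq_or_lt with heq | hlt'
    · exact ⟨b, a, hb, ha, heq⟩
    obtain ⟨c, hc, hc1 | hc2⟩ := hmid (b.2 + 1) (by omega) hlt'
    · exact ⟨b, c, hb, hc, hc1.symm⟩
    · exact ih hc (by omega) (fun z hz hz' => hmid z (by omega) hz') (by omega)

variable (hP : IsMatching P) (hA : ¬ HasNbrAlign P)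
include hP hA

lemma fst_lt_snd_of_gapIndex_eq {a b : ℕ × ℕ} (ha : IsArc P a) (hb : IsArc P b)
    (hg : gapIndex P a.1 = gapIndex P b.2) : a.1 < b.2 := by
  refine lt_of_le_of_ne (not_lt.1 fun hlt => hA ?_) (hP.fst_ne_snd ha hb)
  refine hasNbrAlign_of_forall_between ha hb hlt fun z hz hz' => ?_
  exact exists_arc_of_gapIndex_eq hg.symm hz.le hz' (by
    have := hb.mem_Icc.2; have := ha.mem_Icc.1; simp only [mem_Icc] at *; omega)

lemma snd_lt_snd_of_gapIndex_fst_eq (hL : ¬ HasLeftNesting P) {a b : ℕ × ℕ} (ha : IsArc P a)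
    (hb : IsArc P b) (hg : gapIndex P a.1 = gapIndex P b.1) (hlt : a.1 < b.1) : a.2 < b.2 := by
  induction h : b.1 - a.1 using Nat.strong_induction_on generalizing a with
  | _ d ih =>
  -- `a.1 + 1` lies in the gap of `b.1`, so it is a left endpoint (a right endpoint would come
  -- after `b.1`), and the absence of left nestings puts its partner beyond `a.2`.
  obtain ⟨c, hc, hcz⟩ : ∃ c, IsArc P c ∧ (c.1 = a.1 + 1 ∨ c.2 = a.1 + 1) := by
    rcases (Nat.succ_le_of_lt hlt).eq_or_lt with heq | hlt'
    · exact ⟨b, hb, Or.inl heq.symm⟩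
    · exact exists_arc_of_gapIndex_eq hg (Nat.le_succ a.1) hlt' (by
        have := ha.mem_Icc.1; have := hb.mem_Icc.1; simp only [mem_Icc] at *; omega)
  have hgc : gapIndex P (a.1 + 1) = gapIndex P b.1 :=
    le_antisymm (gapIndex_mono P hlt) (hg ▸ gapIndex_mono P (Nat.le_succ a.1))
  have hc1 : c.1 = a.1 + 1 := hcz.resolve_right fun hc2 => by
    have := fst_lt_snd_of_gapIndex_eq hP hA hb hc (by rw [hc2, hgc]); omega
  have hac : a.2 < c.2 := by
    refine lt_of_le_of_ne (not_lt.1 fun h' => hL ⟨a, c, ha, hc, hc1.symm, h'⟩) fun h' => ?_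
    obtain rfl := hP.arc_eq_of_common_endpoint ha hc (by omega)
    omega
  rcases (show c.1 ≤ b.1 by omega).eq_or_lt with hcb | hcb
  · rwa [← hP.arc_eq_of_common_endpoint hc hb (Or.inl hcb)]
  · exact hac.trans (ih _ (by omega) hc (by rw [hc1, hgc]) hcb rfl)

lemma fst_lt_fst_of_gapIndex_snd_eq (hR : ¬ HasRightNesting P) {a b : ℕ × ℕ} (ha : IsArc P a)
    (hb : IsArc P b) (hg : gapIndex P a.2 = gapIndex P b.2) (hlt : a.2 < b.2) : a.1 < b.1 := by
  induction h : b.2 - a.2 using Nat.strong_induction_on generalizing b with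
  | _ d ih =>
  obtain ⟨c, hc, hcz⟩ : ∃ c, IsArc P c ∧ (c.1 = b.2 - 1 ∨ c.2 = b.2 - 1) := by
    rcases (show a.2 ≤ b.2 - 1 by omega).eq_or_lt with heq | hlt'
    · exact ⟨a, ha, Or.inr heq⟩
    · exact exists_arc_of_gapIndex_eq hg hlt'.le (by omega) (by
        have := ha.mem_Icc.2; have := hb.mem_Icc.2; simp only [mem_Icc] at *; omega)
  have hgc : gapIndex P (b.2 - 1) = gapIndex P b.2 :=
    le_antisymm (gapIndex_mono P (by omega)) (hg ▸ gapIndex_mono P (by omega))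
  have hc2 : c.2 = b.2 - 1 := hcz.resolve_left fun hc1 => by
    have := fst_lt_snd_of_gapIndex_eq hP hA hc ha (by rw [hc1, hgc, hg]); omega
  have hcb : c.1 < b.1 := by
    refine lt_of_le_of_ne (not_lt.1 fun h' => hR ⟨b, c, hb, hc, h', by omega⟩) fun h' => ?_
    obtain rfl := hP.arc_eq_of_common_endpoint hc hb (Or.inl h')
    omega
  rcases (show a.2 ≤ c.2 by omega).eq_or_lt with hac | hac
  · rwa [hP.arc_eq_of_common_endpoint ha hc (Or.inr (Or.inr (Or.inr hac)))]
  · exact (ih _ (by omega) hc (by rw [hc2, hgc, hg]) hac rfl).trans hcb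

end GapIndex

section GapPairs

open GapMultiset

variable {n : ℕ} {P : Finpartition (Icc 1 n)}

noncomputable def gapPair (P : Finpartition (Icc 1 n)) (a : ℕ × ℕ) : ℕ × ℕ :=
  (gapIndex P a.1, gapIndex P a.2)

noncomputable def gapPairs (P : Finpartition (Icc 1 n)) : Multiset (ℕ × ℕ) :=
  (arcFinset P).val.map (gapPair P)

lemma card_filter_gapPairs (p : ℕ × ℕ → Prop) [DecidablePred p] :
    ((gapPairs P).filter p).card = #{b ∈ arcFinset P | p (gapPair P b)} := by
  rw [gapPairs, Multiset.filter_map, Multiset.card_map]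
  rfl

lemma card_gapPairs (P : Finpartition (Icc 1 n)) : Multiset.card (gapPairs P) = numArcs P := by
  rw [gapPairs, Multiset.card_map, numArcs_eq_card_arcFinset]
  rfl

lemma count_gapPairs (e : ℕ × ℕ) :
    (gapPairs P).count e = #{b ∈ arcFinset P | gapPair P b = e} := by
  rw [Multiset.count_eq_card_filter_eq, card_filter_gapPairs]
  simp only [eq_comm]

lemma sum_range_leftCount_gapPairs (T : ℕ) :
    ∑ g ∈ range T, leftCount (gapPairs P) g = #{b ∈ arcFinset P | gapIndex P b.1 < T} := by
  simp only [leftCount]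
  rw [Multiset.sum_range_card_filter_eq, card_filter_gapPairs]
  rfl

lemma sum_range_rightCount_gapPairs (T : ℕ) :
    ∑ g ∈ range T, rightCount (gapPairs P) g = #{b ∈ arcFinset P | gapIndex P b.2 < T} := by
  simp only [rightCount]
  rw [Multiset.sum_range_card_filter_eq, card_filter_gapPairs]
  rfl

lemma IsMatching.endpointsDistinct (hP : IsMatching P) : EndpointsDistinct (arcFinset P) :=
  fun _ ha _ hb => hP.arc_eq_of_common_endpoint (mem_arcFinset.1 ha) (mem_arcFinset.1 hb)

lemma IsMatching.position_eq (hP : IsMatching P) {x : ℕ} (hx : x ∈ Icc 1 n) :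
    x = gapIndex P x + #{b ∈ arcFinset P | b.1 < x} + #{b ∈ arcFinset P | b.2 < x} + 1 := by
  have hsub : endpoints (arcFinset P) ⊆ Icc 1 n := fun y hy => by
    obtain ⟨a, ha, rfl | rfl⟩ := mem_endpoints.1 hy
    exacts [(mem_arcFinset.1 ha).mem_Icc.1, (mem_arcFinset.1 ha).mem_Icc.2]
  have hIcc : #{y ∈ Icc 1 n | y < x} = x - 1 := by
    rw [show {y ∈ Icc 1 n | y < x} = Icc 1 (x - 1) by
      ext; simp only [mem_filter, mem_Icc] at *; omega, Nat.card_Icc, Nat.add_sub_cancel]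
  rw [← sdiff_union_of_subset hsub, filter_union, card_union_of_disjoint
    (disjoint_filter_filter sdiff_disjoint), card_filter_endpoints
    (fun a ha => (mem_arcFinset.1 ha).1) hP.endpointsDistinct] at hIcc
  rw [gapIndex, isolated]
  rw [mem_Icc] at hx
  omega

noncomputable def pairRank (P : Finpartition (Icc 1 n)) (a : ℕ × ℕ) : ℕ :=
  #{b ∈ arcFinset P |
    gapIndex P b.1 = gapIndex P a.1 ∧ gapIndex P b.2 = gapIndex P a.2 ∧ b.2 < a.2}

lemma pairRank_lt_count {a : ℕ × ℕ} (ha : IsArc P a) :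
    pairRank P a < (gapPairs P).count (gapPair P a) := by
  rw [count_gapPairs, pairRank]
  refine card_lt_card ((ssubset_iff_of_subset (monotone_filter_right _ fun b _ hb =>
    Prod.ext hb.1 hb.2.1)).2 ⟨a, mem_filter.2 ⟨mem_arcFinset.2 ha, rfl⟩, fun h => ?_⟩)
  exact (mem_filter.1 h).2.2.2.false

end GapPairs

section Reconstruction

open GapMultiset

variable {n : ℕ} {P : Finpartition (Icc 1 n)} (hP : IsMatching P) (hA : ¬ HasNbrAlign P)
  (hL : ¬ HasLeftNesting P) (hR : ¬ HasRightNesting P)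
include hP hA

lemma snd_lt_fst_iff_gapIndex_lt {a b : ℕ × ℕ} (ha : IsArc P a) (hb : IsArc P b) :
    b.2 < a.1 ↔ gapIndex P b.2 < gapIndex P a.1 := by
  refine ⟨fun h => lt_of_le_of_ne (gapIndex_mono P h.le) fun hg => ?_, lt_of_gapIndex_lt⟩
  have := fst_lt_snd_of_gapIndex_eq hP hA ha hb hg.symm
  omega

lemma fst_lt_snd_iff_gapIndex_lt_succ {a b : ℕ × ℕ} (ha : IsArc P a) (hb : IsArc P b) :
    b.1 < a.2 ↔ gapIndex P b.1 < gapIndex P a.2 + 1 := by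
  refine ⟨fun h => Nat.lt_succ_of_le (gapIndex_mono P h.le), fun h => ?_⟩
  rcases (Nat.le_of_lt_succ h).eq_or_lt with hg | hg
  · exact fst_lt_snd_of_gapIndex_eq hP hA hb ha hg
  · exact lt_of_gapIndex_lt hg

lemma card_filter_snd_lt_fst {a : ℕ × ℕ} (ha : IsArc P a) :
    #{b ∈ arcFinset P | b.2 < a.1} =
      ∑ g ∈ range (gapIndex P a.1), rightCount (gapPairs P) g := by
  rw [sum_range_rightCount_gapPairs]
  exact congrArg card <| filter_congr fun b hb =>
    snd_lt_fst_iff_gapIndex_lt hP hA ha (mem_arcFinset.1 hb)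

lemma card_filter_fst_lt_snd {a : ℕ × ℕ} (ha : IsArc P a) :
    #{b ∈ arcFinset P | b.1 < a.2} =
      ∑ g ∈ range (gapIndex P a.2 + 1), leftCount (gapPairs P) g := by
  rw [sum_range_leftCount_gapPairs]
  exact congrArg card <| filter_congr fun b hb =>
    fst_lt_snd_iff_gapIndex_lt_succ hP hA ha (mem_arcFinset.1 hb)

include hL hR

lemma fst_lt_fst_iff_snd_lt_snd_of_gapIndex_eq {a b : ℕ × ℕ} (ha : IsArc P a) (hb : IsArc P b)
    (hg : gapIndex P b.1 = gapIndex P a.1 ∨ gapIndex P b.2 = gapIndex P a.2) :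
    b.1 < a.1 ↔ b.2 < a.2 := by
  obtain rfl | hab := eq_or_ne a b
  · exact iff_of_false (lt_irrefl _) (lt_irrefl _)
  have hne1 : a.1 ≠ b.1 := fun h => hab (hP.arc_eq_of_common_endpoint ha hb (Or.inl h))
  have hne2 : a.2 ≠ b.2 := fun h => hab (hP.arc_eq_of_common_endpoint ha hb (by simp [h]))
  have key {x y u v : ℕ} (hne : x ≠ y) (h1 : y < x → v < u) (h2 : x < y → u < v) :
      y < x ↔ v < u :=
    ⟨h1, fun h => (lt_or_gt_of_ne hne).resolve_left fun h' => (h2 h').asymm h⟩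
  rcases hg with hg | hg
  · exact key hne1 (snd_lt_snd_of_gapIndex_fst_eq hP hA hL hb ha hg)
      (snd_lt_snd_of_gapIndex_fst_eq hP hA hL ha hb hg.symm)
  · exact (key hne2 (fst_lt_fst_of_gapIndex_snd_eq hP hA hR hb ha hg)
      (fst_lt_fst_of_gapIndex_snd_eq hP hA hR ha hb hg.symm)).symm

lemma card_filter_fst_lt_fst {a : ℕ × ℕ} (ha : IsArc P a) :
    #{b ∈ arcFinset P | b.1 < a.1} = ∑ g ∈ range (gapIndex P a.1), leftCount (gapPairs P) g
      + leftRank (gapPairs P) (gapPair P a) + pairRank P a := by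
  have key : ∀ b ∈ arcFinset P, b.1 < a.1 ↔ gapIndex P b.1 < gapIndex P a.1 ∨
      (gapIndex P b.1 = gapIndex P a.1 ∧ gapIndex P b.2 < gapIndex P a.2) ∨
      (gapIndex P b.1 = gapIndex P a.1 ∧ gapIndex P b.2 = gapIndex P a.2 ∧ b.2 < a.2) := by
    intro b hb
    have hiff (hg : gapIndex P b.1 = gapIndex P a.1) :=
      fst_lt_fst_iff_snd_lt_snd_of_gapIndex_eq hP hA hL hR ha (mem_arcFinset.1 hb) (Or.inl hg)
    constructor
    · intro h
      rcases (gapIndex_mono P h.le).lt_or_eq with h1 | h1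
      · exact Or.inl h1
      have h2 := (hiff h1).1 h
      rcases (gapIndex_mono P h2.le).lt_or_eq with h3 | h3
      · exact Or.inr (Or.inl ⟨h1, h3⟩)
      · exact Or.inr (Or.inr ⟨h1, h3, h2⟩)
    · rintro (h | ⟨h1, h2⟩ | ⟨h1, -, h2⟩)
      · exact lt_of_gapIndex_lt h
      · exact (hiff h1).2 (lt_of_gapIndex_lt h2)
      · exact (hiff h1).2 h2
  rw [filter_congr key, card_filter_or_of_disjoint _ (fun b _ => by omega),
    card_filter_or_of_disjoint _ (fun b _ => by omega), sum_range_leftCount_gapPairs, leftRank,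
    card_filter_gapPairs, pairRank, add_assoc]
  rfl

lemma card_filter_snd_lt_snd {a : ℕ × ℕ} (ha : IsArc P a) :
    #{b ∈ arcFinset P | b.2 < a.2} = ∑ g ∈ range (gapIndex P a.2), rightCount (gapPairs P) g
      + ((gapPairs P).filter fun f => f.2 = (gapPair P a).2 ∧ f.1 < (gapPair P a).1).card
      + pairRank P a := by
  have key : ∀ b ∈ arcFinset P, b.2 < a.2 ↔ gapIndex P b.2 < gapIndex P a.2 ∨
      (gapIndex P b.2 = gapIndex P a.2 ∧ gapIndex P b.1 < gapIndex P a.1) ∨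
      (gapIndex P b.1 = gapIndex P a.1 ∧ gapIndex P b.2 = gapIndex P a.2 ∧ b.2 < a.2) := by
    intro b hb
    have hiff (hg : gapIndex P b.2 = gapIndex P a.2) :=
      fst_lt_fst_iff_snd_lt_snd_of_gapIndex_eq hP hA hL hR ha (mem_arcFinset.1 hb) (Or.inr hg)
    constructor
    · intro h
      rcases (gapIndex_mono P h.le).lt_or_eq with h1 | h1
      · exact Or.inl h1
      have h2 := (hiff h1).2 h
      rcases (gapIndex_mono P h2.le).lt_or_eq with h3 | h3
      · exact Or.inr (Or.inl ⟨h1, h3⟩)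
      · exact Or.inr (Or.inr ⟨h3, h1, h⟩)
    · rintro (h | ⟨h1, h2⟩ | ⟨-, -, h⟩)
      · exact lt_of_gapIndex_lt h
      · exact (hiff h1).1 (lt_of_gapIndex_lt h2)
      · exact h
  rw [filter_congr key, card_filter_or_of_disjoint _ (fun b _ => by omega),
    card_filter_or_of_disjoint _ (fun b _ => by omega), sum_range_rightCount_gapPairs,
    card_filter_gapPairs, pairRank, add_assoc]
  rfl

lemma leftEnd_rightEnd_pairRank {a : ℕ × ℕ} (ha : IsArc P a) :
    (leftEnd (gapPairs P) (gapPair P a) (pairRank P a),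
      rightEnd (gapPairs P) (gapPair P a) (pairRank P a)) = a := by
  have h1 := hP.position_eq ha.mem_Icc.1
  have h2 := hP.position_eq ha.mem_Icc.2
  rw [card_filter_fst_lt_fst hP hA hL hR ha, card_filter_snd_lt_fst hP hA ha] at h1
  rw [card_filter_fst_lt_snd hP hA ha, card_filter_snd_lt_snd hP hA hL hR ha, sum_range_succ] at h2
  simp only [leftEnd, rightEnd, rightRank, gapStart, gapSize, sum_add_distrib, gapPair] at h1 h2 ⊢
  exact Prod.ext (by omega) (by omega)

lemma arcFinset_eq_arcs_gapPairs : arcFinset P = arcs (gapPairs P) := by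
  refine (eq_of_subset_of_card_le (fun a ha => ?_) ?_)
  · have ha := mem_arcFinset.1 ha
    exact mem_arcs.2 ⟨gapPair P a, Multiset.count_pos.1 ((Nat.zero_le _).trans_lt
      (pairRank_lt_count ha)), _, pairRank_lt_count ha, leftEnd_rightEnd_pairRank hP hA hL hR ha⟩
  · rw [card_arcs, card_gapPairs, numArcs_eq_card_arcFinset]

end Reconstruction

namespace GapMultiset

variable {μ : Multiset (ℕ × ℕ)} {s : ℕ}

def toMatching (hμ : Valid μ s) : Finpartition (Icc 1 (s + 2 * Multiset.card μ)) :=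
  ofArcs _ (arcs μ) (arcsInRange hμ) endpointsDistinct_arcs

variable (hμ : Valid μ s)

lemma arcFinset_toMatching : arcFinset (toMatching hμ) = arcs μ := arcFinset_ofArcs

lemma isMatching_toMatching : IsMatching (toMatching hμ) := isMatching_ofArcs

lemma numArcs_toMatching : numArcs (toMatching hμ) = Multiset.card μ := by
  rw [numArcs_eq_card_arcFinset, arcFinset_toMatching, card_arcs]

lemma not_hasNbrAlign_toMatching : ¬ HasNbrAlign (toMatching hμ) := by
  rintro ⟨a, b, ha, hb, h⟩
  rw [← mem_arcFinset, arcFinset_toMatching] at ha hb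
  exact not_snd_add_one_eq_fst_of_mem_arcs ha hb h

lemma not_hasLeftNesting_toMatching : ¬ HasLeftNesting (toMatching hμ) := by
  rintro ⟨a, b, ha, hb, h⟩
  rw [← mem_arcFinset, arcFinset_toMatching] at ha hb
  exact not_leftNested_of_mem_arcs ha hb h

lemma not_hasRightNesting_toMatching : ¬ HasRightNesting (toMatching hμ) := by
  rintro ⟨a, b, ha, hb, h⟩
  rw [← mem_arcFinset, arcFinset_toMatching] at ha hb
  exact not_rightNested_of_mem_arcs ha hb h

lemma gapIndex_toMatching {g x : ℕ} (hg : g ≤ s)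
    (hx : gapStart μ g ≤ x ∧ x < gapEnd μ g) : gapIndex (toMatching hμ) x = g := by
  rw [gapIndex, isolated, arcFinset_toMatching, Icc_sdiff_endpoints_arcs hμ, filter_image,
    card_image_of_injective _ gapEnd_strictMono.injective]
  convert card_range g using 2
  ext h
  simp only [mem_filter, mem_range]
  constructor
  · rintro ⟨-, hh⟩
    by_contra! hgh
    have := (gapEnd_strictMono (μ := μ)).monotone hgh
    omega
  · intro hh
    exact ⟨by omega, (gapEnd_lt_gapStart hh).trans_le hx.1⟩

lemma gapPair_toMatching {e : ℕ × ℕ} (he : e ∈ μ) {j : ℕ} (hj : j < μ.count e) :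
    gapPair (toMatching hμ) (leftEnd μ e j, rightEnd μ e j) = e := by
  have hl := leftEnd_mem_gap hj
  have hr := rightEnd_mem_gap hj
  exact Prod.ext
    (gapIndex_toMatching hμ ((hμ e he).1.trans (hμ e he).2) ⟨hl.1, leftEnd_lt_gapEnd hj⟩)
    (gapIndex_toMatching hμ (hμ e he).2 ⟨(Nat.le_add_right _ _).trans hr.1, hr.2⟩)

lemma gapPairs_toMatching : gapPairs (toMatching hμ) = μ := by
  ext e₀
  rw [count_gapPairs, arcFinset_toMatching]
  have hfilter : {b ∈ arcs μ | gapPair (toMatching hμ) b = e₀}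
      = (range (μ.count e₀)).image fun j => (leftEnd μ e₀ j, rightEnd μ e₀ j) := by
    ext a
    simp only [mem_filter, mem_image, mem_range]
    constructor
    · rintro ⟨ha, rfl⟩
      obtain ⟨e, he, j, hj, rfl⟩ := mem_arcs.1 ha
      rw [gapPair_toMatching hμ he hj]
      exact ⟨j, hj, rfl⟩
    · rintro ⟨j, hj, rfl⟩
      have he₀ := Multiset.count_pos.1 ((Nat.zero_le j).trans_lt hj)
      exact ⟨mem_arcs.2 ⟨e₀, he₀, j, hj, rfl⟩, gapPair_toMatching hμ he₀ hj⟩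
  rw [hfilter, card_image_of_injOn fun j hj j' hj' h =>
    (leftEnd_inj (mem_range.1 hj) (mem_range.1 hj') (congrArg Prod.fst h)).2, card_range]

end GapMultiset

section Counting

open GapMultiset

lemma Fin.card_subtype_fst_le_snd (t : ℕ) :
    Fintype.card {p : Fin t × Fin t // p.1 ≤ p.2} = t * (t + 1) / 2 := by
  rw [← Fintype.card_congr Sym2.sortEquiv, Sym2.card, Fintype.card_fin, Nat.choose_two_right,
    Nat.add_sub_cancel, mul_comm]

lemma ncard_setOf_valid (s k : ℕ) :
    {μ : Multiset (ℕ × ℕ) | Valid μ s ∧ Multiset.card μ = k}.ncard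
      = ((s + 1) * (s + 2) / 2 + k - 1).choose k := by
  let toMultiset (σ : Sym {p : Fin (s + 1) × Fin (s + 1) // p.1 ≤ p.2} k) :
      Multiset (ℕ × ℕ) := σ.1.map fun p => ((p.1.1 : ℕ), (p.1.2 : ℕ))
  have hinj : Function.Injective toMultiset := fun σ τ h => Subtype.ext <|
    Multiset.map_injective (fun p q hpq => Subtype.ext <| Prod.ext
      (Fin.ext (Prod.ext_iff.1 hpq).1) (Fin.ext (Prod.ext_iff.1 hpq).2)) h
  have hrange : Set.range toMultiset = {μ | Valid μ s ∧ Multiset.card μ = k} := by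
    ext μ
    constructor
    · rintro ⟨σ, rfl⟩
      refine ⟨fun e he => ?_, by simp [toMultiset]⟩
      obtain ⟨p, -, rfl⟩ := Multiset.mem_map.1 he
      exact ⟨p.2, Nat.le_of_lt_succ p.1.2.2⟩
    · rintro ⟨hμ, rfl⟩
      have hlt (e : ℕ × ℕ) (he : e ∈ μ) : e.1 < s + 1 ∧ e.2 < s + 1 :=
        ⟨by have := hμ e he; omega, Nat.lt_succ_of_le (hμ e he).2⟩
      refine ⟨⟨μ.attach.map fun e =>
        ⟨(⟨e.1.1, (hlt e.1 e.2).1⟩, ⟨e.1.2, (hlt e.1 e.2).2⟩), (hμ e.1 e.2).1⟩,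
        by simp⟩, ?_⟩
      simp only [toMultiset, Multiset.map_map]
      exact (Multiset.map_congr rfl fun _ _ => rfl).trans μ.attach_map_val
  rw [← hrange, Set.ncard_range_of_injective hinj, Nat.card_eq_fintype_card,
    Sym.card_sym_eq_choose, Fin.card_subtype_fst_le_snd, Nat.add_assoc s 1 1]

end Counting

section Main

open GapMultiset

variable {n : ℕ} {P : Finpartition (Icc 1 n)}

lemma IsMatching.card_isolated (hP : IsMatching P) : #(isolated P) = n - 2 * numArcs P := by
  rw [isolated, card_sdiff_of_subset fun x hx => ?_,
    card_endpoints (fun a ha => (mem_arcFinset.1 ha).1) hP.endpointsDistinct, Nat.card_Icc,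
    Nat.add_sub_cancel, numArcs_eq_card_arcFinset]
  obtain ⟨a, ha, rfl | rfl⟩ := mem_endpoints.1 hx
  exacts [(mem_arcFinset.1 ha).mem_Icc.1, (mem_arcFinset.1 ha).mem_Icc.2]

lemma IsMatching.valid_gapPairs (hP : IsMatching P) {s : ℕ} (hn : n = s + 2 * numArcs P) :
    Valid (gapPairs P) s := by
  intro e he
  obtain ⟨a, ha, rfl⟩ := Multiset.mem_map.1 he
  have ha := mem_arcFinset.1 ha
  refine ⟨gapIndex_mono P ha.1.le, ?_⟩
  have := card_le_card (filter_subset (· < a.2) (isolated P))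
  rw [hP.card_isolated] at this
  exact this.trans_eq (by omega)

lemma eq_of_gapPairs_eq {Q : Finpartition (Icc 1 n)} (hP : IsMatching P) (hQ : IsMatching Q)
    (hPA : ¬ HasNbrAlign P) (hPL : ¬ HasLeftNesting P) (hPR : ¬ HasRightNesting P)
    (hQA : ¬ HasNbrAlign Q) (hQL : ¬ HasLeftNesting Q) (hQR : ¬ HasRightNesting Q)
    (h : gapPairs P = gapPairs Q) : P = Q := by
  refine hP.ext_of_isArc_iff hQ fun a => ?_
  rw [← mem_arcFinset, ← mem_arcFinset, arcFinset_eq_arcs_gapPairs hP hPA hPL hPR,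
    arcFinset_eq_arcs_gapPairs hQ hQA hQL hQR, h]

theorem rnum_add_two_mul (s k : ℕ) :
    Rnum (s + 2 * k) k = ((s + 1) * (s + 2) / 2 + k - 1).choose k := by
  rw [Rnum, ← ncard_setOf_valid s k]
  refine Set.BijOn.ncard_eq (f := gapPairs) ⟨?_, ?_, ?_⟩
  · rintro P ⟨hP, hk, -⟩
    exact ⟨hP.valid_gapPairs (by rw [hk]), (card_gapPairs P).trans hk⟩
  · rintro P ⟨hP, -, hPA, hPL, hPR⟩ Q ⟨hQ, -, hQA, hQL, hQR⟩
    exact eq_of_gapPairs_eq hP hQ hPA hPL hPR hQA hQL hQR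
  · rintro μ ⟨hμ, rfl⟩
    exact ⟨toMatching hμ, ⟨isMatching_toMatching hμ, numArcs_toMatching hμ,
      not_hasNbrAlign_toMatching hμ, not_hasLeftNesting_toMatching hμ,
      not_hasRightNesting_toMatching hμ⟩, gapPairs_toMatching hμ⟩

end Main

/-- `R(n+k-1, k) = C( C(n-k+1, 2) + k - 1, k )`. -/
theorem stmt_9 (n k : ℕ) (hn : 1 ≤ n) (hk : k ≤ n - 1) :
    Rnum (n + k - 1) k =
      Nat.choose ((n - k) * (n - k + 1) / 2 + k - 1) k := by
  obtain ⟨s, rfl⟩ : ∃ s, n = s + k + 1 := ⟨n - k - 1, by omega⟩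
  rw [show s + k + 1 + k - 1 = s + 2 * k by omega, show s + k + 1 - k = s + 1 by omega]
  exact rnum_add_two_mul s k
end

section
/- For all integers n ≥ 1 and 0 ≤ k ≤ n-1, the number of set partitions of [n] with exactly k arcs and no right nestings equals the binomial coefficient C( (n-k)(n-k+1)/2 + k - 1, k ), i.e. T(n,k) = C( C(n-k+1, 2) + k - 1, k ). -/
open Finset

/-!
A set partition is determined by its set of arcs, and the arc sets of partitions of `[n]` are
exactly the sets of pairs `i < j` in `[n]` in which no two pairs share a left or a right endpoint.
Forbidding right nestings says that along a run of consecutive right endpoints the left endpoints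
increase.

Let `o` be the largest element of `[n]` that is not a right endpoint and `t = n - o ≤ k`. The arcs
ending at `o + 1, …, n` form such a run, hence are determined by their set of left endpoints. This
set is an arbitrary `t`-subset of `[n - 1]` avoiding the left endpoints of the other arcs (the
`r`-th smallest element of such a set is automatically less than `o + r`), and those other arcs
form an arc set on `[o - 1]` with `k - t` arcs and no right nesting. This gives
`T(n, k) = ∑ₜ T(n - t - 1, k - t) · multichoose (n - k) t`, and the Vandermonde identity for
multichoose turns it into `T(m + k, k) = multichoose (m (m + 1) / 2) k` by induction on `m`.
-/

theorem Nat.multichoose_add (a b k : ℕ) :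
    (a + b).multichoose k = ∑ ij ∈ antidiagonal k, a.multichoose ij.1 * b.multichoose ij.2 := by
  have hcast : ∀ c i : ℕ, Ring.multichoose (c : ℤ) i = (c.multichoose i : ℤ) := fun c i => by
    rw [Nat.multichoose_eq]
    rfl
  have h := Ring.add_choose_eq (R := ℤ) (r := -(a : ℤ)) (s := -(b : ℤ)) k (Commute.all _ _)
  rw [← neg_add, Ring.choose_neg', ← Nat.cast_add, hcast] at h
  simp only [Ring.choose_neg', hcast, smul_mul_smul_comm, ← Int.negOnePow_add] at h
  rw [sum_congr rfl fun ij hij => by rw [← Nat.cast_add, mem_antidiagonal.1 hij], ← smul_sum] at h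
  exact_mod_cast (smul_left_cancel_iff _).1 h

lemma Finpartition.eq_of_forall_part_eq {α : Type*} [DecidableEq α] {s : Finset α}
    {P Q : Finpartition s} (h : ∀ a ∈ s, P.part a = Q.part a) : P = Q := by
  have key : ∀ {P Q : Finpartition s}, (∀ a ∈ s, P.part a = Q.part a) →
      ∀ B ∈ P.parts, B ∈ Q.parts := by
    intro P Q h B hB
    obtain ⟨a, ha⟩ := P.nonempty_of_mem_parts hB
    rw [← P.part_eq_of_mem hB ha, h a (P.le hB ha)]
    exact Q.part_mem.2 (P.le hB ha)
  ext B
  exact ⟨key h B, key (fun a ha => (h a ha).symm) B⟩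

section Rank

def rankIn (V : Finset ℕ) (v : ℕ) : ℕ := #{w ∈ V | w ≤ v}

variable {V : Finset ℕ}

lemma rankIn_mono : Monotone (rankIn V) :=
  fun _ _ hvw => card_le_card (monotone_filter_right V fun _ _ h => h.trans hvw)

lemma strictMonoOn_rankIn : StrictMonoOn (rankIn V) V := by
  intro v _ w hw hvw
  refine card_lt_card ⟨monotone_filter_right V fun _ _ h => h.trans hvw.le, fun h => ?_⟩
  exact absurd (mem_filter.1 (h (mem_filter.2 ⟨hw, le_rfl⟩))).2 (not_le.2 hvw)

lemma image_rankIn : V.image (rankIn V) = Icc 1 #V := by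
  refine eq_of_subset_of_card_le (fun r hr => ?_) ?_
  · obtain ⟨v, hv, rfl⟩ := mem_image.1 hr
    exact mem_Icc.2 ⟨card_pos.2 ⟨v, mem_filter.2 ⟨hv, le_rfl⟩⟩, card_le_card (filter_subset _ _)⟩
  · rw [card_image_of_injOn strictMonoOn_rankIn.injOn, Nat.card_Icc, Nat.add_sub_cancel]

lemma lt_add_rankIn {o v : ℕ} (hV : ∀ w ∈ V, w < o + #V) (hv : v ∈ V) :
    v < o + rankIn V v := by
  have hsplit := card_filter_add_card_filter_not (s := V) (· ≤ v)
  have habove : #{w ∈ V | ¬ w ≤ v} ≤ #(Ioo v (o + #V)) :=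
    card_le_card fun w hw => by
      obtain ⟨hw, hwv⟩ := mem_filter.1 hw
      exact mem_Ioo.2 ⟨not_le.1 hwv, hV w hw⟩
  have := hV v hv
  rw [Nat.card_Ioo] at habove
  unfold rankIn
  omega

lemma rankIn_Icc {o d j : ℕ} (hj : j ≤ d) : rankIn (Icc (o + 1) d) j = j - o := by
  have : {w ∈ Icc (o + 1) d | w ≤ j} = Icc (o + 1) j := by
    ext w
    simp only [mem_filter, mem_Icc]
    omega
  rw [rankIn, this, Nat.card_Icc, Nat.add_sub_add_right]

lemma rankIn_image {α : Type*} [DecidableEq α] {T : Finset α} {f : α → ℕ}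
    (hf : Set.InjOn f T) (x : ℕ) : rankIn (T.image f) x = #{q ∈ T | f q ≤ x} := by
  rw [rankIn, filter_image, card_image_of_injOn (hf.mono (coe_subset.2 (filter_subset _ _)))]

end Rank

structure IsArcSet (A : Finset (ℕ × ℕ)) : Prop where
  fst_lt_snd : ∀ p ∈ A, p.1 < p.2
  injOn_fst : Set.InjOn Prod.fst (A : Set (ℕ × ℕ))
  injOn_snd : Set.InjOn Prod.snd (A : Set (ℕ × ℕ))

def NoRightNesting (A : Finset (ℕ × ℕ)) : Prop :=
  ∀ p ∈ A, ∀ q ∈ A, p.2 + 1 = q.2 → p.1 < q.1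

open Classical in
noncomputable def arcSets (n k : ℕ) : Finset (Finset (ℕ × ℕ)) :=
  {A ∈ powersetCard k (Icc 1 n ×ˢ Icc 1 n) | IsArcSet A ∧ NoRightNesting A}

lemma mem_arcSets {n k : ℕ} {A : Finset (ℕ × ℕ)} :
    A ∈ arcSets n k ↔ A ⊆ Icc 1 n ×ˢ Icc 1 n ∧ #A = k ∧ IsArcSet A ∧ NoRightNesting A := by
  simp [arcSets, mem_powersetCard, and_assoc]

lemma bounds_of_mem_arcSets {n k : ℕ} {A : Finset (ℕ × ℕ)} (hA : A ∈ arcSets n k) {p : ℕ × ℕ}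
    (hp : p ∈ A) : 1 ≤ p.1 ∧ p.1 < p.2 ∧ p.2 ≤ n := by
  obtain ⟨hbox, -, hArc, -⟩ := mem_arcSets.1 hA
  have := mem_product.1 (hbox hp)
  simp only [mem_Icc] at this
  exact ⟨this.1.1, hArc.fst_lt_snd p hp, this.2.2⟩

namespace IsArcSet

variable {A B : Finset (ℕ × ℕ)}

lemma mono (hA : IsArcSet A) (hBA : B ⊆ A) : IsArcSet B :=
  ⟨fun p hp => hA.fst_lt_snd p (hBA hp), hA.injOn_fst.mono (by simpa using hBA),
    hA.injOn_snd.mono (by simpa using hBA)⟩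

lemma union (hA : IsArcSet A) (hB : IsArcSet B)
    (hfst : Disjoint (A.image Prod.fst) (B.image Prod.fst))
    (hsnd : Disjoint (A.image Prod.snd) (B.image Prod.snd)) : IsArcSet (A ∪ B) := by
  have hAB : Disjoint A B := by
    rw [disjoint_left]
    exact fun p hpA hpB => disjoint_left.1 hfst (mem_image_of_mem _ hpA) (mem_image_of_mem _ hpB)
  refine ⟨fun p hp => (mem_union.1 hp).elim (hA.fst_lt_snd p) (hB.fst_lt_snd p), ?_, ?_⟩
  · rw [coe_union, Set.injOn_union (disjoint_coe.2 hAB)]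
    exact ⟨hA.injOn_fst, hB.injOn_fst, fun p hp q hq h =>
      disjoint_left.1 hfst (mem_image_of_mem _ hp) (h ▸ mem_image_of_mem _ hq)⟩
  · rw [coe_union, Set.injOn_union (disjoint_coe.2 hAB)]
    exact ⟨hA.injOn_snd, hB.injOn_snd, fun p hp q hq h =>
      disjoint_left.1 hsnd (mem_image_of_mem _ hp) (h ▸ mem_image_of_mem _ hq)⟩

lemma card_image_snd (hA : IsArcSet A) : #(A.image Prod.snd) = #A :=
  card_image_of_injOn hA.injOn_snd

lemma card_image_fst (hA : IsArcSet A) : #(A.image Prod.fst) = #A :=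
  card_image_of_injOn hA.injOn_fst

end IsArcSet

namespace NoRightNesting

variable {A B : Finset (ℕ × ℕ)}

lemma mono (hA : NoRightNesting A) (hBA : B ⊆ A) : NoRightNesting B :=
  fun p hp q hq => hA p (hBA hp) q (hBA hq)

lemma union (hA : NoRightNesting A) (hB : NoRightNesting B)
    (hsep : ∀ p ∈ A, ∀ q ∈ B, p.2 + 1 < q.2) : NoRightNesting (A ∪ B) := by
  intro p hp q hq h
  rcases mem_union.1 hp with hp | hp <;> rcases mem_union.1 hq with hq | hq
  · exact hA p hp q hq h
  · exact absurd h (hsep p hp q hq).ne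
  · have := hsep q hq p hp; omega
  · exact hB p hp q hq h

end NoRightNesting

def tailArcs (o : ℕ) (V : Finset ℕ) : Finset (ℕ × ℕ) :=
  V.image fun v => (v, o + rankIn V v)

section Tail

variable {o : ℕ} {V : Finset ℕ}

lemma image_fst_tailArcs : (tailArcs o V).image Prod.fst = V := by
  rw [tailArcs, image_image]
  exact image_id

lemma card_tailArcs : #(tailArcs o V) = #V :=
  card_image_of_injective _ fun _ _ h => congrArg Prod.fst h

lemma image_snd_tailArcs : (tailArcs o V).image Prod.snd = Icc (o + 1) (o + #V) := by
  rw [tailArcs, image_image, ← image_add_left_Icc, ← image_rankIn, image_image]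
  rfl

lemma lt_snd_of_mem_tailArcs {q : ℕ × ℕ} (hq : q ∈ tailArcs o V) : o < q.2 :=
  (mem_Icc.1 (image_snd_tailArcs ▸ mem_image_of_mem Prod.snd hq)).1

lemma isArcSet_tailArcs (hV : ∀ v ∈ V, v < o + #V) : IsArcSet (tailArcs o V) := by
  refine ⟨?_, ?_, ?_⟩ <;> simp only [tailArcs, coe_image]
  · simp only [mem_image]
    rintro _ ⟨v, hv, rfl⟩
    exact lt_add_rankIn hV hv
  · rintro _ ⟨v, -, rfl⟩ _ ⟨w, -, rfl⟩ h
    simp_all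
  · rintro _ ⟨v, hv, rfl⟩ _ ⟨w, hw, rfl⟩ h
    simp [strictMonoOn_rankIn.injOn hv hw (Nat.add_left_cancel h)]

lemma noRightNesting_tailArcs : NoRightNesting (tailArcs o V) := by
  simp only [NoRightNesting, tailArcs, mem_image]
  rintro _ ⟨v, hv, rfl⟩ _ ⟨w, hw, rfl⟩ h
  by_contra! hwv
  simp only at h hwv
  have := rankIn_mono (V := V) hwv
  omega

end Tail

lemma NoRightNesting.fst_lt_fst_of_snd_lt {T : Finset (ℕ × ℕ)} (hT : NoRightNesting T)
    {o d : ℕ} (hsnd : T.image Prod.snd = Icc o d) {p q : ℕ × ℕ} (hp : p ∈ T) (hq : q ∈ T)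
    (hpq : p.2 < q.2) : p.1 < q.1 := by
  obtain ⟨i, hi⟩ := Nat.exists_eq_add_of_lt hpq
  induction i generalizing q with
  | zero => exact hT p hp q hq hi.symm
  | succ i ih =>
    have hmid : p.2 + i + 1 ∈ T.image Prod.snd := by
      have hpo := mem_Icc.1 (hsnd ▸ mem_image_of_mem Prod.snd hp)
      have hqd := mem_Icc.1 (hsnd ▸ mem_image_of_mem Prod.snd hq)
      rw [hsnd, mem_Icc]
      omega
    obtain ⟨r, hr, hr2⟩ := mem_image.1 hmid
    exact (ih hr (by omega) hr2).trans (hT r hr q hq (by omega))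

lemma eq_tailArcs {T : Finset (ℕ × ℕ)} (hT : IsArcSet T) (hnr : NoRightNesting T) {o d : ℕ}
    (hsnd : T.image Prod.snd = Icc (o + 1) d) : tailArcs o (T.image Prod.fst) = T := by
  have hle : ∀ p ∈ T, ∀ q ∈ T, q.1 ≤ p.1 ↔ q.2 ≤ p.2 := by
    intro p hp q hq
    constructor
    · intro h
      by_contra! hlt
      exact absurd h (not_le.2 (hnr.fst_lt_fst_of_snd_lt hsnd hp hq hlt))
    · intro h
      rcases h.lt_or_eq with hlt | heq
      · exact (hnr.fst_lt_fst_of_snd_lt hsnd hq hp hlt).le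
      · rw [hT.injOn_snd hq hp heq]
  have hrank : ∀ p ∈ T, rankIn (T.image Prod.fst) p.1 = p.2 - o := by
    intro p hp
    have hpd := mem_Icc.1 (hsnd ▸ mem_image_of_mem Prod.snd hp)
    rw [rankIn_image hT.injOn_fst, filter_congr (fun q hq => hle p hp q hq),
      ← rankIn_image hT.injOn_snd, hsnd, rankIn_Icc hpd.2]
  rw [tailArcs, image_image]
  conv_rhs => rw [← image_id (s := T)]
  refine image_congr fun p hp => Prod.ext rfl ?_
  have hpo := mem_Icc.1 (hsnd ▸ mem_image_of_mem Prod.snd hp)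
  simp only [Function.comp_apply, hrank p hp, id]
  omega

def HasTail (c t : ℕ) (A : Finset (ℕ × ℕ)) : Prop :=
  c + 1 ∉ A.image Prod.snd ∧ Ioc (c + 1) (c + 1 + t) ⊆ A.image Prod.snd

instance (c t : ℕ) (A : Finset (ℕ × ℕ)) : Decidable (HasTail c t A) :=
  inferInstanceAs (Decidable (_ ∧ _))

section Split

variable {c j t : ℕ} {A : Finset (ℕ × ℕ)}

lemma filter_snd_le_union_filter_lt_snd (A : Finset (ℕ × ℕ)) (c : ℕ) :
    {p ∈ A | p.2 ≤ c} ∪ {p ∈ A | c < p.2} = A := by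
  rw [← filter_or, filter_true_of_mem fun p _ => le_or_gt p.2 c]

lemma image_snd_filter_lt_snd (hbox : A ⊆ Icc 1 (c + 1 + t) ×ˢ Icc 1 (c + 1 + t))
    (h : HasTail c t A) : {p ∈ A | c < p.2}.image Prod.snd = Icc (c + 1 + 1) (c + 1 + t) := by
  ext i
  simp only [mem_image, mem_filter, mem_Icc]
  constructor
  · rintro ⟨p, ⟨hp, hcp⟩, rfl⟩
    have hpn := (mem_Icc.1 (mem_product.1 (hbox hp)).2).2
    have hpc : p.2 ≠ c + 1 := fun hpc => h.1 (mem_image.2 ⟨p, hp, hpc⟩)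
    omega
  · rintro ⟨hci, hin⟩
    obtain ⟨p, hp, rfl⟩ := mem_image.1 (h.2 (mem_Ioc.2 ⟨by omega, hin⟩))
    exact ⟨p, ⟨hp, by omega⟩, rfl⟩

lemma splitTail_mem (hA : A ∈ arcSets (c + 1 + t) (j + t)) (h : HasTail c t A) :
    {p ∈ A | p.2 ≤ c} ∈ arcSets c j ∧
      {p ∈ A | c < p.2}.image Prod.fst ∈
        powersetCard t (Icc 1 (c + t) \ {p ∈ A | p.2 ≤ c}.image Prod.fst) := by
  obtain ⟨hbox, hcard, hArc, hnr⟩ := mem_arcSets.1 hA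
  have hTcard : #{p ∈ A | c < p.2} = t := by
    rw [← (hArc.mono (filter_subset _ _)).card_image_snd, image_snd_filter_lt_snd hbox h,
      Nat.card_Icc]
    omega
  have hHcard : #{p ∈ A | p.2 ≤ c} = j := by
    have hdisj : Disjoint {p ∈ A | p.2 ≤ c} {p ∈ A | c < p.2} :=
      disjoint_filter.2 fun p _ h1 h2 => by omega
    have := card_union_of_disjoint hdisj
    rw [filter_snd_le_union_filter_lt_snd] at this
    omega
  refine ⟨mem_arcSets.2 ⟨fun p hp => ?_, hHcard, hArc.mono (filter_subset _ _),
    hnr.mono (filter_subset _ _)⟩, mem_powersetCard.2 ⟨fun v hv => ?_, ?_⟩⟩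
  · obtain ⟨hpA, hpc⟩ := mem_filter.1 hp
    have := bounds_of_mem_arcSets hA hpA
    simp only [mem_product, mem_Icc]
    omega
  · obtain ⟨p, hp, rfl⟩ := mem_image.1 hv
    obtain ⟨hpA, hcp⟩ := mem_filter.1 hp
    have := bounds_of_mem_arcSets hA hpA
    refine mem_sdiff.2 ⟨mem_Icc.2 ⟨by omega, by omega⟩, fun hq => ?_⟩
    obtain ⟨q, hq, hqp⟩ := mem_image.1 hq
    obtain ⟨hqA, hqc⟩ := mem_filter.1 hq
    rw [hArc.injOn_fst hqA hpA hqp] at hqc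
    omega
  · rw [(hArc.mono (filter_subset _ _)).card_image_fst, hTcard]

lemma filter_union_tailArcs {A₀ : Finset (ℕ × ℕ)} (hA₀ : ∀ p ∈ A₀, p.2 ≤ c) (V : Finset ℕ) :
    {p ∈ A₀ ∪ tailArcs (c + 1) V | p.2 ≤ c} = A₀ ∧
      {p ∈ A₀ ∪ tailArcs (c + 1) V | c < p.2} = tailArcs (c + 1) V := by
  have hV : ∀ q ∈ tailArcs (c + 1) V, c + 1 < q.2 := fun q hq => lt_snd_of_mem_tailArcs hq
  rw [filter_union, filter_union, filter_true_of_mem hA₀,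
    filter_false_of_mem fun q hq => by have := hV q hq; omega,
    filter_false_of_mem fun p hp => by have := hA₀ p hp; omega,
    filter_true_of_mem fun q hq => by have := hV q hq; omega]
  simp

lemma hasTail_union_tailArcs {A₀ : Finset (ℕ × ℕ)} (hA₀ : ∀ p ∈ A₀, p.2 ≤ c) (V : Finset ℕ) :
    HasTail c #V (A₀ ∪ tailArcs (c + 1) V) := by
  rw [HasTail, image_union, image_snd_tailArcs, mem_union, mem_Icc]
  refine ⟨fun h => ?_, fun i hi => ?_⟩
  · rcases h with h | h
    · obtain ⟨p, hp, hpc⟩ := mem_image.1 h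
      have := hA₀ p hp
      omega
    · omega
  · rw [mem_union, mem_Icc]
    have := mem_Ioc.1 hi
    right
    omega

lemma union_tailArcs_mem {A₀ : Finset (ℕ × ℕ)} {V : Finset ℕ} (hA₀ : A₀ ∈ arcSets c j)
    (hV : V ∈ powersetCard t (Icc 1 (c + t) \ A₀.image Prod.fst)) :
    A₀ ∪ tailArcs (c + 1) V ∈ arcSets (c + 1 + t) (j + t) ∧
      HasTail c t (A₀ ∪ tailArcs (c + 1) V) := by
  obtain ⟨hbox₀, hcard₀, hArc₀, hnr₀⟩ := mem_arcSets.1 hA₀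
  obtain ⟨hVsub, hVcard⟩ := mem_powersetCard.1 hV
  have hVmem : ∀ v ∈ V, 1 ≤ v ∧ v ≤ c + t ∧ v ∉ A₀.image Prod.fst := fun v hv => by
    have := mem_sdiff.1 (hVsub hv)
    exact ⟨(mem_Icc.1 this.1).1, (mem_Icc.1 this.1).2, this.2⟩
  have hsnd₀ : ∀ p ∈ A₀, p.2 ≤ c := fun p hp => (bounds_of_mem_arcSets hA₀ hp).2.2
  have hsnd : ∀ q ∈ tailArcs (c + 1) V, c + 1 < q.2 ∧ q.2 ≤ c + 1 + t := fun q hq => by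
    have := mem_Icc.1 (image_snd_tailArcs ▸ mem_image_of_mem Prod.snd hq)
    omega
  have hdisj : Disjoint A₀ (tailArcs (c + 1) V) :=
    disjoint_left.2 fun p hp hp' => by have := hsnd₀ p hp; have := hsnd p hp'; omega
  refine ⟨mem_arcSets.2 ⟨union_subset (fun p hp => ?_) (fun q hq => ?_), ?_, ?_, ?_⟩,
    hVcard ▸ hasTail_union_tailArcs hsnd₀ V⟩
  · have := mem_product.1 (hbox₀ hp)
    simp only [mem_product, mem_Icc] at this ⊢
    omega
  · have := hVmem q.1 (by simpa only [image_fst_tailArcs] using mem_image_of_mem Prod.fst hq)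
    have := hsnd q hq
    simp only [mem_product, mem_Icc]
    omega
  · rw [card_union_of_disjoint hdisj, card_tailArcs, hcard₀, hVcard]
  · refine hArc₀.union (isArcSet_tailArcs fun v hv => by have := hVmem v hv; omega) ?_ ?_
    · rw [image_fst_tailArcs, disjoint_right]
      exact fun v hv => (hVmem v hv).2.2
    · refine disjoint_left.2 fun i hi hi' => ?_
      obtain ⟨p, hp, rfl⟩ := mem_image.1 hi
      obtain ⟨q, hq, hqp⟩ := mem_image.1 hi'
      have := hsnd₀ p hp
      have := hsnd q hq
      omega
  · refine hnr₀.union noRightNesting_tailArcs fun p hp q hq => ?_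
    have := hsnd₀ p hp
    have := hsnd q hq
    omega

end Split

lemma card_filter_hasTail (c j t : ℕ) :
    #{A ∈ arcSets (c + 1 + t) (j + t) | HasTail c t A} = #(arcSets c j) * (c + t - j).choose t := by
  have hfibre : ∀ A₀ ∈ arcSets c j,
      #(powersetCard t (Icc 1 (c + t) \ A₀.image Prod.fst)) = (c + t - j).choose t := by
    intro A₀ hA₀
    obtain ⟨-, hcard, hArc, -⟩ := mem_arcSets.1 hA₀
    have hsub : A₀.image Prod.fst ⊆ Icc 1 (c + t) := fun i hi => by
      obtain ⟨p, hp, rfl⟩ := mem_image.1 hi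
      have := bounds_of_mem_arcSets hA₀ hp
      exact mem_Icc.2 ⟨this.1, by omega⟩
    rw [card_powersetCard, card_sdiff_of_subset hsub, hArc.card_image_fst, hcard, Nat.card_Icc,
      Nat.add_sub_cancel]
  rw [← sum_const_nat hfibre, ← card_sigma]
  refine card_nbij' (fun A => ⟨{p ∈ A | p.2 ≤ c}, {p ∈ A | c < p.2}.image Prod.fst⟩)
    (fun x => x.1 ∪ tailArcs (c + 1) x.2) (fun A hA => ?_) (fun x hx => ?_) (fun A hA => ?_)
    (fun x hx => ?_)
  · obtain ⟨hA, h⟩ := mem_filter.1 hA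
    exact mem_sigma.2 (splitTail_mem hA h)
  · obtain ⟨hA₀, hV⟩ := mem_sigma.1 hx
    exact mem_filter.2 (union_tailArcs_mem hA₀ hV)
  · obtain ⟨hA, h⟩ := mem_filter.1 hA
    obtain ⟨hbox, -, hArc, hnr⟩ := mem_arcSets.1 hA
    dsimp only
    rw [eq_tailArcs (hArc.mono (filter_subset _ _)) (hnr.mono (filter_subset _ _))
      (image_snd_filter_lt_snd hbox h), filter_snd_le_union_filter_lt_snd]
  · obtain ⟨A₀, V⟩ := x
    obtain ⟨hA₀, -⟩ := mem_sigma.1 hx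
    obtain ⟨h₀, h⟩ := filter_union_tailArcs (fun p hp => (bounds_of_mem_arcSets hA₀ hp).2.2) V
    simp only [h₀, h, image_fst_tailArcs]

def tailLen (n : ℕ) (A : Finset (ℕ × ℕ)) : ℕ :=
  n - Nat.findGreatest (· ∉ A.image Prod.snd) n

lemma tailLen_eq_iff {c t n : ℕ} {A : Finset (ℕ × ℕ)} (hn : c + 1 + t = n) :
    tailLen n A = t ↔ HasTail c t A := by
  have hle := Nat.findGreatest_le (P := (· ∉ A.image Prod.snd)) n
  have : tailLen n A = t ↔ Nat.findGreatest (· ∉ A.image Prod.snd) n = c + 1 := by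
    unfold tailLen
    omega
  rw [this, Nat.findGreatest_eq_iff, HasTail, subset_iff]
  simp only [mem_Ioc, not_not]
  constructor
  · rintro ⟨-, h1, h2⟩
    exact ⟨h1 (by omega), fun i hi => h2 hi.1 (by omega)⟩
  · rintro ⟨h1, h2⟩
    exact ⟨by omega, fun _ => h1, fun i h h' => h2 ⟨h, by omega⟩⟩

lemma tailLen_le {n k : ℕ} {A : Finset (ℕ × ℕ)} (hA : A ∈ arcSets n k) : tailLen n A ≤ k := by
  obtain ⟨-, hcard, hArc, -⟩ := mem_arcSets.1 hA
  have hsub : Ioc (Nat.findGreatest (· ∉ A.image Prod.snd) n) n ⊆ A.image Prod.snd :=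
    fun i hi => not_not.1 (Nat.findGreatest_is_greatest (mem_Ioc.1 hi).1 (mem_Ioc.1 hi).2)
  have := card_le_card hsub
  rwa [Nat.card_Ioc, hArc.card_image_snd, hcard] at this

lemma card_arcSets_succ_add (m k : ℕ) :
    #(arcSets (m + 1 + k) k) =
      ∑ ij ∈ antidiagonal k, #(arcSets (m + ij.1) ij.1) * (m + 1).multichoose ij.2 := by
  rw [card_eq_sum_card_fiberwise (t := antidiagonal k)
    (f := fun A => (k - tailLen (m + 1 + k) A, tailLen (m + 1 + k) A))
    fun A hA => mem_antidiagonal.2 (Nat.sub_add_cancel (tailLen_le hA))]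
  refine sum_congr rfl fun ⟨j, t⟩ hjt => ?_
  obtain rfl : j + t = k := mem_antidiagonal.1 hjt
  have hn : m + j + 1 + t = m + 1 + (j + t) := by ring
  rw [Nat.multichoose_eq, show m + 1 + t - 1 = m + j + t - j by omega, ← card_filter_hasTail, hn]
  refine congrArg card (filter_congr fun A _ => ?_)
  rw [← tailLen_eq_iff hn, Prod.mk.injEq]
  omega

lemma card_arcSets_self (k : ℕ) : #(arcSets k k) = Nat.multichoose 0 k := by
  cases k with
  | zero =>
    rw [Nat.multichoose_zero_right]
    refine card_eq_one.2 ⟨∅, eq_singleton_iff_unique_mem.2 ⟨?_, fun A hA => ?_⟩⟩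
    · exact mem_arcSets.2 ⟨empty_subset _, card_empty, ⟨by simp, by simp, by simp⟩,
        by simp [NoRightNesting]⟩
    · exact card_eq_zero.1 (mem_arcSets.1 hA).2.1
  | succ k =>
    rw [Nat.multichoose_zero_succ]
    refine card_eq_zero.2 (eq_empty_of_forall_notMem fun A hA => ?_)
    obtain ⟨-, hcard, hArc, -⟩ := mem_arcSets.1 hA
    have hsub : A.image Prod.snd ⊆ Icc 2 (k + 1) := fun i hi => by
      obtain ⟨p, hp, rfl⟩ := mem_image.1 hi
      have := bounds_of_mem_arcSets hA hp
      exact mem_Icc.2 ⟨by omega, this.2.2⟩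
    have := card_le_card hsub
    rw [hArc.card_image_snd, hcard, Nat.card_Icc] at this
    omega

theorem card_arcSets (m k : ℕ) : #(arcSets (m + k) k) = (m * (m + 1) / 2).multichoose k := by
  induction m generalizing k with
  | zero => simpa using card_arcSets_self k
  | succ m ih =>
    have htri : (m + 1) * (m + 1 + 1) / 2 = m * (m + 1) / 2 + (m + 1) := by
      rw [show (m + 1) * (m + 1 + 1) = m * (m + 1) + (m + 1) * 2 by ring,
        Nat.add_mul_div_right _ _ two_pos]
    rw [card_arcSets_succ_add, htri, Nat.multichoose_add]
    exact sum_congr rfl fun ij _ => by rw [ih]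

section Partition

variable {n : ℕ}

lemma isArc_iff_part {P : Finpartition (Icc 1 n)} {a : ℕ × ℕ} :
    IsArc P a ↔ a.1 < a.2 ∧ a.1 ∈ Icc 1 n ∧ a.2 ∈ P.part a.1 ∧
      ∀ c ∈ P.part a.1, ¬ (a.1 < c ∧ c < a.2) := by
  constructor
  · rintro ⟨hlt, B, hB, h1, h2, hgap⟩
    rw [P.part_eq_of_mem hB h1]
    exact ⟨hlt, P.le hB h1, h2, hgap⟩
  · rintro ⟨hlt, h1, h2, hgap⟩
    exact ⟨hlt, _, P.part_mem.2 h1, P.mem_part h1, h2, hgap⟩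

open Classical in
noncomputable def arcsOf (P : Finpartition (Icc 1 n)) : Finset (ℕ × ℕ) :=
  {a ∈ Icc 1 n ×ˢ Icc 1 n | IsArc P a}

variable {P : Finpartition (Icc 1 n)}

lemma arcsOf_subset : arcsOf P ⊆ Icc 1 n ×ˢ Icc 1 n := by
  classical
  exact filter_subset _ _

lemma mem_arcsOf {a : ℕ × ℕ} : a ∈ arcsOf P ↔ IsArc P a := by
  classical
  refine ⟨fun h => (mem_filter.1 h).2, fun h => mem_filter.2 ⟨?_, h⟩⟩
  obtain ⟨-, B, hB, h1, h2, -⟩ := h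
  exact mem_product.2 ⟨P.le hB h1, P.le hB h2⟩

lemma numArcs_eq_card_arcsOf : numArcs P = #(arcsOf P) := by
  rw [numArcs, ← Set.ncard_coe_finset]
  congr 1
  ext a
  exact mem_arcsOf.symm

lemma isArcSet_arcsOf (P : Finpartition (Icc 1 n)) : IsArcSet (arcsOf P) := by
  refine ⟨fun a ha => (mem_arcsOf.1 ha).1, fun a ha b hb hab => ?_, fun a ha b hb hab => ?_⟩
  · obtain ⟨halt, B, hB, ha1, ha2, hagap⟩ := mem_arcsOf.1 ha
    obtain ⟨hblt, B', hB', hb1, hb2, hbgap⟩ := mem_arcsOf.1 hb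
    obtain rfl := P.eq_of_mem_parts hB hB' ha1 (hab ▸ hb1)
    refine Prod.ext hab (le_antisymm ?_ ?_)
    · exact not_lt.1 fun h => hagap b.2 hb2 ⟨hab ▸ hblt, h⟩
    · exact not_lt.1 fun h => hbgap a.2 ha2 ⟨hab ▸ halt, h⟩
  · obtain ⟨halt, B, hB, ha1, ha2, hagap⟩ := mem_arcsOf.1 ha
    obtain ⟨hblt, B', hB', hb1, hb2, hbgap⟩ := mem_arcsOf.1 hb
    obtain rfl := P.eq_of_mem_parts hB hB' ha2 (hab ▸ hb2)
    refine Prod.ext (le_antisymm ?_ ?_) hab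
    · exact not_lt.1 fun h => hbgap a.1 ha1 ⟨h, hab ▸ halt⟩
    · exact not_lt.1 fun h => hagap b.1 hb1 ⟨h, hab ▸ hblt⟩

lemma noRightNesting_arcsOf_iff : NoRightNesting (arcsOf P) ↔ ¬ HasRightNesting P := by
  constructor
  · rintro h ⟨a, b, ha, hb, hab, hba⟩
    exact absurd hab (h b (mem_arcsOf.2 hb) a (mem_arcsOf.2 ha) hba).asymm
  · intro h p hp q hq hpq
    have hne : p.1 ≠ q.1 := fun heq => by
      rw [(isArcSet_arcsOf P).injOn_fst hp hq heq] at hpq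
      omega
    exact (hne.lt_or_gt).resolve_right fun hlt =>
      h ⟨q, p, mem_arcsOf.1 hq, mem_arcsOf.1 hp, hlt, hpq⟩

end Partition

def arcRel (A : Finset (ℕ × ℕ)) (i j : ℕ) : Prop := (i, j) ∈ A

open Relation

namespace IsArcSet

variable {A : Finset (ℕ × ℕ)} (hA : IsArcSet A)
include hA

lemma rightUnique : Relator.RightUnique (arcRel A) :=
  fun _ _ _ h h' => congrArg Prod.snd (hA.injOn_fst h h' rfl)

lemma le_of_reflTransGen {i j : ℕ} (h : ReflTransGen (arcRel A) i j) : i ≤ j := by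
  induction h with
  | refl => rfl
  | tail _ hjk ih => exact ih.trans (hA.fst_lt_snd _ hjk).le

/-- Arcs have distinct right endpoints, so two chains of arcs ending at the same point are
nested. -/
lemma reflTransGen_of_join {i j : ℕ} (hij : i ≤ j) (h : Join (ReflTransGen (arcRel A)) i j) :
    ReflTransGen (arcRel A) i j := by
  obtain ⟨z, hiz, hjz⟩ := h
  have hswap : Relator.RightUnique (Function.swap (arcRel A)) :=
    fun _ _ _ h h' => congrArg Prod.fst (hA.injOn_snd h h' rfl)
  rcases ReflTransGen.total_of_right_unique hswap (reflTransGen_swap.2 hiz)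
    (reflTransGen_swap.2 hjz) with h | h
  · rw [reflTransGen_swap] at h
    obtain rfl := le_antisymm hij (hA.le_of_reflTransGen h)
    rfl
  · exact reflTransGen_swap.1 h

def setoid : Setoid ℕ where
  r := Join (ReflTransGen (arcRel A))
  iseqv := equivalence_join_reflTransGen fun _ _ c hab hac =>
    ⟨c, by rw [hA.rightUnique hab hac], ReflTransGen.refl⟩

open Classical in
noncomputable def toFinpartition (n : ℕ) : Finpartition (Icc 1 n) :=
  Finpartition.ofSetSetoid hA.setoid (Icc 1 n)

open Classical in
lemma mem_part_toFinpartition {n x y : ℕ} :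
    y ∈ (hA.toFinpartition n).part x ↔
      x ∈ Icc 1 n ∧ y ∈ Icc 1 n ∧ Join (ReflTransGen (arcRel A)) x y :=
  Finpartition.mem_part_ofSetSetoid_iff_rel _

lemma isArc_toFinpartition {n : ℕ} (hbox : A ⊆ Icc 1 n ×ˢ Icc 1 n) {a : ℕ × ℕ} :
    IsArc (hA.toFinpartition n) a ↔ a ∈ A := by
  simp only [isArc_iff_part, hA.mem_part_toFinpartition]
  constructor
  · rintro ⟨hlt, h1, ⟨-, -, hjoin⟩, hgap⟩
    rcases (hA.reflTransGen_of_join hlt.le hjoin).cases_head with heq | ⟨d, hd, hda⟩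
    · exact absurd heq hlt.ne
    · have hdbox := mem_product.1 (hbox hd)
      obtain rfl : d = a.2 := by
        by_contra hne
        exact hgap d ⟨h1, hdbox.2, d, ReflTransGen.single hd, ReflTransGen.refl⟩
          ⟨hA.fst_lt_snd _ hd, lt_of_le_of_ne (hA.le_of_reflTransGen hda) hne⟩
      exact hd
  · intro ha
    have habox := mem_product.1 (hbox ha)
    refine ⟨hA.fst_lt_snd a ha, habox.1, ⟨habox.1, habox.2, a.2, ReflTransGen.single ha,
      ReflTransGen.refl⟩, fun c ⟨_, _, hjoin⟩ ⟨h1c, hc2⟩ => ?_⟩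
    rcases (hA.reflTransGen_of_join h1c.le hjoin).cases_head with heq | ⟨d, hd, hdc⟩
    · exact h1c.ne heq
    · obtain rfl := hA.rightUnique hd ha
      exact absurd (hA.le_of_reflTransGen hdc) (not_le.2 hc2)

lemma arcsOf_toFinpartition {n : ℕ} (hbox : A ⊆ Icc 1 n ×ˢ Icc 1 n) :
    arcsOf (hA.toFinpartition n) = A := by
  ext a
  rw [mem_arcsOf, hA.isArc_toFinpartition hbox]

end IsArcSet

section Reconstruction

variable {n : ℕ} {P : Finpartition (Icc 1 n)}

lemma part_eq_of_reflTransGen {x y : ℕ} (h : ReflTransGen (arcRel (arcsOf P)) x y) :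
    P.part x = P.part y := by
  induction h with
  | refl => rfl
  | tail _ hzw ih =>
    obtain ⟨-, B, hB, hz, hw, -⟩ := mem_arcsOf.1 hzw
    rw [ih, P.part_eq_of_mem hB hz, P.part_eq_of_mem hB hw]

lemma reflTransGen_of_mem_part {x y : ℕ} (hy : y ∈ P.part x) (hxy : x ≤ y) :
    ReflTransGen (arcRel (arcsOf P)) x y := by
  induction y using Nat.strong_induction_on with
  | _ y ih =>
    have hx : x ∈ Icc 1 n := P.part_nonempty.1 ⟨y, hy⟩
    rcases hxy.lt_or_eq with hlt | rfl
    · set C := {c ∈ P.part x | x ≤ c ∧ c < y}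
      have hxC : x ∈ C := mem_filter.2 ⟨P.mem_part hx, le_rfl, hlt⟩
      -- `C.max'` is the predecessor of `y` in its block
      obtain ⟨hcB, hxc, hcy⟩ := mem_filter.1 (C.max'_mem ⟨x, hxC⟩)
      refine (ih _ hcy hcB hxc).tail (mem_arcsOf.2 ⟨hcy, _, P.part_mem.2 hx, hcB, hy, ?_⟩)
      exact fun e he ⟨hce, hey⟩ =>
        absurd (C.le_max' e (mem_filter.2 ⟨he, hxc.trans hce.le, hey⟩)) (not_le.2 hce)
    · rfl

lemma toFinpartition_arcsOf : (isArcSet_arcsOf P).toFinpartition n = P := by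
  refine Finpartition.eq_of_forall_part_eq fun x hx => ?_
  ext y
  rw [IsArcSet.mem_part_toFinpartition]
  constructor
  · rintro ⟨-, hy, z, hxz, hyz⟩
    rw [part_eq_of_reflTransGen hxz, ← part_eq_of_reflTransGen hyz]
    exact P.mem_part hy
  · intro hy
    refine ⟨hx, P.part_subset x hy, ?_⟩
    rcases le_total x y with hxy | hyx
    · exact ⟨y, reflTransGen_of_mem_part hy hxy, ReflTransGen.refl⟩
    · have hxy : x ∈ P.part y := by
        rw [P.part_eq_of_mem (P.part_mem.2 hx) hy]
        exact P.mem_part hx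
      exact ⟨x, ReflTransGen.refl, reflTransGen_of_mem_part hxy hyx⟩

lemma arcsOf_injective : Function.Injective (arcsOf (n := n)) := by
  intro P Q h
  rw [← toFinpartition_arcsOf (P := P), ← toFinpartition_arcsOf (P := Q)]
  congr 1

end Reconstruction

theorem Tnum_eq_card_arcSets (n k : ℕ) : Tnum n k = #(arcSets n k) := by
  have himg : arcsOf '' {P : Finpartition (Icc 1 n) | numArcs P = k ∧ ¬ HasRightNesting P} =
      arcSets n k := by
    ext A
    simp only [Set.mem_image, Set.mem_ofPred_eq, mem_coe]
    constructor
    · rintro ⟨P, ⟨hk, hnr⟩, rfl⟩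
      exact mem_arcSets.2 ⟨arcsOf_subset, numArcs_eq_card_arcsOf ▸ hk, isArcSet_arcsOf P,
        noRightNesting_arcsOf_iff.2 hnr⟩
    · intro hA
      obtain ⟨hbox, hk, hArc, hnr⟩ := mem_arcSets.1 hA
      have hA := hArc.arcsOf_toFinpartition hbox
      refine ⟨hArc.toFinpartition n, ⟨?_, ?_⟩, hA⟩
      · rw [numArcs_eq_card_arcsOf, hA, hk]
      · rwa [← noRightNesting_arcsOf_iff, hA]
  rw [Tnum, ← Set.ncard_image_of_injective _ arcsOf_injective, himg, Set.ncard_coe_finset]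

theorem stmt_12_general (n k : ℕ) (hk : k ≤ n - 1) :
    Tnum n k = Nat.choose ((n - k) * (n - k + 1) / 2 + k - 1) k := by
  have h := card_arcSets (n - k) k
  rw [Nat.sub_add_cancel (by omega)] at h
  rw [Tnum_eq_card_arcSets, h, Nat.multichoose_eq]

/-- `T(n,k) = C( C(n-k+1, 2) + k - 1, k )`. -/
theorem stmt_12 (n k : ℕ) (hn : 1 ≤ n) (hk : k ≤ n - 1) :
    Tnum n k = Nat.choose ((n - k) * (n - k + 1) / 2 + k - 1) k :=
  stmt_12_general n k hk
end
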